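/- arXiv:1110.1085 — 8 statements merged into one kernel-verified Lean document; each statement's English description precedes it below -/
import Mathlib

section
/- Let Y be a finite set and let Q₁ and Q₂ be probability distributions on Y. The following are equivalent: (i) there exist finite sets X₁, X₂ and a joint probability distribution P on Y × X₁ × X₂ together with values x₁ ∈ X₁, x₂ ∈ X₂ such that P(X₁=x₁, X₂=x₂) ≠ 0 and Q₁(·) = P(Y=·|X₁=x₁) and Q₂(·) = P(Y=·|X₂=x₂); (ii) supp[Q₁] ∩ supp[Q₂] ≠ ∅. -/
open scoped BigOperators

/-- (Objective Bayesian compatibility, classical case.)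
Two probability distributions `Q₁`, `Q₂` on a finite set `Y` arise by Bayesian
conditioning from a common joint distribution over `Y × X₁ × X₂` (on outcomes `x₁`, `x₂`
that can occur simultaneously) if and only if their supports intersect. -/
theorem classical_objective_bayesian_compatibility
    {Y : Type*} [Fintype Y]
    (Q₁ Q₂ : Y → ℝ)
    (hQ₁0 : ∀ y, 0 ≤ Q₁ y) (hQ₁1 : ∑ y, Q₁ y = 1)
    (hQ₂0 : ∀ y, 0 ≤ Q₂ y) (hQ₂1 : ∑ y, Q₂ y = 1) :
    (∃ (m k : ℕ) (P : Y → Fin m → Fin k → ℝ) (x₁ : Fin m) (x₂ : Fin k),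
      (∀ y a b, 0 ≤ P y a b) ∧
      (∑ y, ∑ a, ∑ b, P y a b = 1) ∧
      ((∑ y, P y x₁ x₂) ≠ 0) ∧
      (∀ y, Q₁ y = (∑ b, P y x₁ b) / ∑ y', ∑ b, P y' x₁ b) ∧
      (∀ y, Q₂ y = (∑ a, P y a x₂) / ∑ y', ∑ a, P y' a x₂))
    ↔ ∃ y, 0 < Q₁ y ∧ 0 < Q₂ y := by
  constructor
  · rintro ⟨m, k, P, x₁, x₂, hP0, hP1, hne, hq1, hq2⟩
    have hex : ∃ y₀, 0 < P y₀ x₁ x₂ := by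
      by_contra hc
      push_neg at hc
      exact hne (Finset.sum_eq_zero fun y _ => le_antisymm (hc y) (hP0 y x₁ x₂))
    obtain ⟨y₀, hy₀⟩ := hex
    have hb1 : 0 < ∑ b, P y₀ x₁ b :=
      lt_of_lt_of_le hy₀ (Finset.single_le_sum (fun b _ => hP0 y₀ x₁ b) (Finset.mem_univ x₂))
    have hd1 : 0 < ∑ y', ∑ b, P y' x₁ b :=
      lt_of_lt_of_le hb1 (Finset.single_le_sum
        (fun y _ => Finset.sum_nonneg fun b _ => hP0 y x₁ b) (Finset.mem_univ y₀))
    have ha2 : 0 < ∑ a, P y₀ a x₂ :=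
      lt_of_lt_of_le hy₀ (Finset.single_le_sum (fun a _ => hP0 y₀ a x₂) (Finset.mem_univ x₁))
    have hd2 : 0 < ∑ y', ∑ a, P y' a x₂ :=
      lt_of_lt_of_le ha2 (Finset.single_le_sum
        (fun y _ => Finset.sum_nonneg fun a _ => hP0 y a x₂) (Finset.mem_univ y₀))
    refine ⟨y₀, ?_, ?_⟩
    · rw [hq1 y₀]; exact div_pos hb1 hd1
    · rw [hq2 y₀]; exact div_pos ha2 hd2
  · rintro ⟨y₀, h1, h2⟩
    classical
    set t : ℝ := min (Q₁ y₀) (Q₂ y₀) / 2 with ht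
    have ht0 : 0 < t := by positivity
    have ht1 : t ≤ Q₁ y₀ / 2 := by
      have := min_le_left (Q₁ y₀) (Q₂ y₀); linarith
    have ht2 : t ≤ Q₂ y₀ / 2 := by
      have := min_le_right (Q₁ y₀) (Q₂ y₀); linarith
    refine ⟨2, 2, fun y a b =>
      if a = 0 then
        (if b = 0 then (if y = y₀ then t else 0)
         else Q₁ y / 2 - (if y = y₀ then t else 0))
      else
        (if b = 0 then Q₂ y / 2 - (if y = y₀ then t else 0)
         else (if y = y₀ then t else 0)),
      0, 0, ?_, ?_, ?_, ?_, ?_⟩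
    · intro y a b
      by_cases hy : y = y₀ <;> fin_cases a <;> fin_cases b <;>
        simp [hy] <;> first
          | exact le_of_lt ht0
          | linarith [hQ₁0 y, hQ₂0 y, ht0.le]
    · have : ∀ y : Y, (∑ a : Fin 2, ∑ b : Fin 2,
          (if a = 0 then
            (if b = 0 then (if y = y₀ then t else 0)
             else Q₁ y / 2 - (if y = y₀ then t else 0))
          else
            (if b = 0 then Q₂ y / 2 - (if y = y₀ then t else 0)
             else (if y = y₀ then t else 0)))) = Q₁ y / 2 + Q₂ y / 2 := by
        intro y
        by_cases hy : y = y₀ <;> simp [Fin.sum_univ_two, hy]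
      rw [Finset.sum_congr rfl fun y _ => this y]
      rw [Finset.sum_add_distrib, ← Finset.sum_div, ← Finset.sum_div, hQ₁1, hQ₂1]
      norm_num
    · have : (∑ y : Y, (if (0 : Fin 2) = 0 then
          (if (0 : Fin 2) = 0 then (if y = y₀ then t else 0)
           else Q₁ y / 2 - (if y = y₀ then t else 0))
        else
          (if (0 : Fin 2) = 0 then Q₂ y / 2 - (if y = y₀ then t else 0)
           else (if y = y₀ then t else 0)))) = t := by
        simp
      rw [this]; exact ne_of_gt ht0
    · have hrow : ∀ y : Y, (∑ b : Fin 2,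
          (if (0 : Fin 2) = 0 then
            (if b = 0 then (if y = y₀ then t else 0)
             else Q₁ y / 2 - (if y = y₀ then t else 0))
          else
            (if b = 0 then Q₂ y / 2 - (if y = y₀ then t else 0)
             else (if y = y₀ then t else 0)))) = Q₁ y / 2 := by
        intro y
        by_cases hy : y = y₀ <;> simp [Fin.sum_univ_two, hy]
      intro y
      rw [hrow y, Finset.sum_congr rfl fun y' _ => hrow y', ← Finset.sum_div, hQ₁1]
      ring
    · have hrow : ∀ y : Y, (∑ a : Fin 2,
          (if a = 0 then
            (if (0 : Fin 2) = 0 then (if y = y₀ then t else 0)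
             else Q₁ y / 2 - (if y = y₀ then t else 0))
          else
            (if (0 : Fin 2) = 0 then Q₂ y / 2 - (if y = y₀ then t else 0)
             else (if y = y₀ then t else 0)))) = Q₂ y / 2 := by
        intro y
        by_cases hy : y = y₀ <;> simp [Fin.sum_univ_two, hy]
      intro y
      rw [hrow y, Finset.sum_congr rfl fun y' _ => hrow y', ← Finset.sum_div, hQ₂1]
      ring
end

section
/- Let σ⁽¹⁾ and σ⁽²⁾ be density matrices on ℂⁿ. The following are equivalent: (i) there exist finite sets X₁, X₂ and a hybrid state (ρ_{x₁,x₂})_{(x₁,x₂)∈X₁×X₂} over X₁ × X₂ and ℂⁿ, together with values x₁ ∈ X₁, x₂ ∈ X₂, such that tr(ρ_{x₁,x₂}) ≠ 0, σ⁽¹⁾ = (Σ_{x₂′} ρ_{x₁,x₂′}) / tr(Σ_{x₂′} ρ_{x₁,x₂′}), and σ⁽²⁾ = (Σ_{x₁′} ρ_{x₁′,x₂}) / tr(Σ_{x₁′} ρ_{x₁′,x₂}); (ii) supp[σ⁽¹⁾] ∩ supp[σ⁽²⁾] ≠ {0}. -/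
open scoped BigOperators ComplexOrder

open Matrix

variable {n : ℕ}

lemma vecMulVec_mulVec' (v w x : Fin n → ℂ) : vecMulVec v w *ᵥ x = (w ⬝ᵥ x) • v := by
  funext i
  simp only [mulVec, vecMulVec_apply, dotProduct, Pi.smul_apply, smul_eq_mul, Finset.sum_mul]
  rw [Finset.sum_congr rfl]
  intro j _
  ring

lemma star_psd_scalar {c : ℂ} (hc : 0 ≤ c) : star c = c := by
  rw [Complex.star_def, Complex.conj_eq_iff_im]
  exact (Complex.nonneg_iff.mp hc).2.symm

lemma vecMulVec_star_psd (v : Fin n → ℂ) : (vecMulVec v (star v)).PosSemidef := by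
  rw [Matrix.posSemidef_iff_dotProduct_mulVec]
  constructor
  · ext i j
    simp [vecMulVec_apply, conjTranspose_apply, mul_comm]
  · intro x
    rw [vecMulVec_mulVec', dotProduct_smul, smul_eq_mul]
    have h1 : star x ⬝ᵥ v = star (star v ⬝ᵥ x) := by rw [star_dotProduct]
    rw [h1]
    exact mul_star_self_nonneg _

lemma cs_dot (a b : Fin n → ℂ) :
    star (star a ⬝ᵥ b) * (star a ⬝ᵥ b) ≤ (star a ⬝ᵥ a) * (star b ⬝ᵥ b) := by
  set d : ℂ := star a ⬝ᵥ a with hd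
  set q : ℂ := star b ⬝ᵥ b with hq
  set z : ℂ := star a ⬝ᵥ b with hz
  by_cases ha : a = 0
  · simp [hz, hd, ha]
  · have hd0 : 0 ≤ d := dotProduct_star_self_nonneg a
    have hdne : d ≠ 0 := fun h => ha (dotProduct_star_self_eq_zero.mp h)
    have hdstar : star d = d := by
      rw [Complex.star_def, Complex.conj_eq_iff_im]
      exact (Complex.nonneg_iff.mp hd0).2.symm
    have key : star (d • b - z • a) ⬝ᵥ (d • b - z • a) = d * (d * q - star z * z) := by
      have hba : star b ⬝ᵥ a = star z := by rw [hz, star_dotProduct]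
      simp only [star_sub, star_smul, sub_dotProduct, dotProduct_sub,
        smul_dotProduct, dotProduct_smul, smul_eq_mul, hba, ← hd, ← hq, ← hz,
        hdstar]
      ring
    have h0 : 0 ≤ d * (d * q - star z * z) := key ▸ dotProduct_star_self_nonneg _
    rw [Complex.nonneg_iff] at h0 hd0
    have hdim : d.im = 0 := hd0.2.symm
    have hdre : 0 < d.re := lt_of_le_of_ne hd0.1 (fun h => hdne (Complex.ext h.symm hdim))
    rw [← sub_nonneg, Complex.nonneg_iff]
    have h1 := h0.1
    have h2 := h0.2.symm
    rw [Complex.mul_re, hdim] at h1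
    rw [Complex.mul_im, hdim] at h2
    simp only [zero_mul, mul_zero, sub_zero, add_zero, zero_add] at h1 h2
    constructor
    · nlinarith [hdre]
    · have : (d * q - star z * z).im = 0 := by
        rcases mul_eq_zero.mp h2 with h | h
        · exact absurd h hdre.ne'
        · exact h
      exact this.symm

lemma key_cs {σ : Matrix (Fin n) (Fin n) ℂ} (hσ : σ.PosSemidef) (w : Fin n → ℂ) :
    ((star w ⬝ᵥ σ *ᵥ w) • σ - vecMulVec (σ *ᵥ w) (star (σ *ᵥ w))).PosSemidef := by
  obtain ⟨B, rfl⟩ : ∃ B : Matrix (Fin n) (Fin n) ℂ, σ = Bᴴ * B := by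
    open scoped MatrixOrder in exact CStarAlgebra.nonneg_iff_eq_star_mul_self.mp hσ.nonneg
  set a : Fin n → ℂ := B *ᵥ w with ha
  have hc : star w ⬝ᵥ (Bᴴ * B) *ᵥ w = star a ⬝ᵥ a := by
    rw [← mulVec_mulVec, dotProduct_mulVec, ← star_mulVec]
  have hc0 : 0 ≤ star a ⬝ᵥ a := dotProduct_star_self_nonneg a
  rw [Matrix.posSemidef_iff_dotProduct_mulVec]
  constructor
  · refine Matrix.IsHermitian.sub ?_ (vecMulVec_star_psd ((Bᴴ * B) *ᵥ w)).1
    show ((star w ⬝ᵥ (Bᴴ * B) *ᵥ w) • (Bᴴ * B))ᴴ = _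
    rw [conjTranspose_smul, hσ.1, hc, star_psd_scalar hc0]
  · intro x
    set b : Fin n → ℂ := B *ᵥ x with hb
    have hq : star x ⬝ᵥ (Bᴴ * B) *ᵥ x = star b ⬝ᵥ b := by
      rw [← mulVec_mulVec, dotProduct_mulVec, ← star_mulVec]
    have hz : star ((Bᴴ * B) *ᵥ w) ⬝ᵥ x = star a ⬝ᵥ b := by
      rw [← mulVec_mulVec, star_mulVec, conjTranspose_conjTranspose, ← dotProduct_mulVec]
    rw [sub_mulVec, dotProduct_sub, smul_mulVec, dotProduct_smul, smul_eq_mul,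
      vecMulVec_mulVec', dotProduct_smul, smul_eq_mul, hc, hq, hz]
    have h1 : star x ⬝ᵥ (Bᴴ * B) *ᵥ w = star (star ((Bᴴ * B) *ᵥ w) ⬝ᵥ x) := by
      rw [star_dotProduct]
    rw [h1, hz, sub_nonneg, mul_comm (star a ⬝ᵥ b)]
    exact cs_dot a b
lemma smul_psd {M : Matrix (Fin n) (Fin n) ℂ} (hM : M.PosSemidef) {c : ℂ} (hc : 0 ≤ c) :
    (c • M).PosSemidef := by
  rw [Matrix.posSemidef_iff_dotProduct_mulVec]
  constructor
  · have hcr : star c = c := by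
      rw [Complex.star_def, Complex.conj_eq_iff_im]
      exact (Complex.nonneg_iff.mp hc).2.symm ▸ rfl
    unfold Matrix.IsHermitian
    rw [conjTranspose_smul, hM.1, hcr]
  · intro x
    rw [smul_mulVec, dotProduct_smul, smul_eq_mul]
    exact mul_nonneg hc (hM.dotProduct_mulVec_nonneg x)

lemma herm_compl {B : Matrix (Fin n) (Fin n) ℂ} (hB : B.IsHermitian) :
    LinearMap.range B.mulVecLin ⊔ LinearMap.ker B.mulVecLin = ⊤ := by
  have hdisj : LinearMap.range B.mulVecLin ⊓ LinearMap.ker B.mulVecLin = ⊥ := by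
    rw [Submodule.eq_bot_iff]
    rintro v ⟨⟨x, rfl⟩, hker⟩
    have hker' : B *ᵥ (B *ᵥ x) = 0 := hker
    have h0 : star (B *ᵥ x) ⬝ᵥ (B *ᵥ x) = 0 := by
      rw [star_mulVec, ← dotProduct_mulVec, hB, hker', dotProduct_zero]
    exact dotProduct_star_self_eq_zero.mp h0
  have h1 := LinearMap.finrank_range_add_finrank_ker B.mulVecLin
  have h2 := Submodule.finrank_sup_add_finrank_inf_eq
    (LinearMap.range B.mulVecLin) (LinearMap.ker B.mulVecLin)
  rw [hdisj, finrank_bot] at h2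
  exact Submodule.eq_top_of_finrank_eq (by omega)

lemma range_le_of_sub_psd {A B : Matrix (Fin n) (Fin n) ℂ} (hA : A.PosSemidef)
    (hB : B.PosSemidef) (hBA : (B - A).PosSemidef) :
    LinearMap.range A.mulVecLin ≤ LinearMap.range B.mulVecLin := by
  have hker : ∀ z, B *ᵥ z = 0 → A *ᵥ z = 0 := by
    intro z hz
    have h1 : star z ⬝ᵥ (B - A) *ᵥ z = - (star z ⬝ᵥ A *ᵥ z) := by
      rw [sub_mulVec, dotProduct_sub, hz, dotProduct_zero, zero_sub]
    have h2 := hBA.dotProduct_mulVec_nonneg z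
    rw [h1, le_neg] at h2
    exact (hA.dotProduct_mulVec_zero_iff z).mp (le_antisymm (by simpa using h2) (hA.dotProduct_mulVec_nonneg z))
  rintro v ⟨x, rfl⟩
  have htop := herm_compl hB.1
  have hv : A.mulVecLin x ∈ LinearMap.range B.mulVecLin ⊔ LinearMap.ker B.mulVecLin :=
    htop ▸ Submodule.mem_top
  rw [Submodule.mem_sup] at hv
  obtain ⟨y, ⟨wy, rfl⟩, z, hzker, hv⟩ := hv
  have hzB : B *ᵥ z = 0 := hzker
  have hzA : A *ᵥ z = 0 := hker z hzB
  -- show z = 0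
  have starA : star z ᵥ* A = 0 := by
    conv_lhs => rw [← hA.1]
    rw [← star_mulVec, hzA, star_zero]
  have starB : star z ᵥ* B = 0 := by
    conv_lhs => rw [← hB.1]
    rw [← star_mulVec, hzB, star_zero]
  have hz0 : z = 0 := by
    have e1 : star z ⬝ᵥ (A.mulVecLin x) = 0 := by
      show star z ⬝ᵥ A *ᵥ x = 0
      rw [dotProduct_mulVec, starA, zero_dotProduct]
    rw [← hv, dotProduct_add] at e1
    have e2 : star z ⬝ᵥ (B.mulVecLin wy) = 0 := by
      show star z ⬝ᵥ B *ᵥ wy = 0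
      rw [dotProduct_mulVec, starB, zero_dotProduct]
    rw [e2, zero_add] at e1
    exact dotProduct_star_self_eq_zero.mp e1
  rw [hz0, add_zero] at hv
  exact ⟨wy, hv⟩

lemma psd_sum {ι : Type*} (s : Finset ι) (f : ι → Matrix (Fin n) (Fin n) ℂ)
    (h : ∀ i ∈ s, (f i).PosSemidef) : (∑ i ∈ s, f i).PosSemidef := by
  induction s using Finset.cons_induction with
  | empty => simpa using Matrix.PosSemidef.zero
  | cons a s ha ih =>
    rw [Finset.sum_cons]
    exact (h a (Finset.mem_cons_self a s)).add (ih fun i hi => h i (Finset.mem_cons_of_mem hi))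

lemma trace_nonneg' {M : Matrix (Fin n) (Fin n) ℂ} (hM : M.PosSemidef) : 0 ≤ M.trace := by
  rw [Matrix.trace]
  apply Finset.sum_nonneg
  intro i _
  have := hM.dotProduct_mulVec_nonneg (Pi.single i 1)
  simpa [dotProduct, Matrix.mulVec, Pi.single_apply, Finset.sum_ite_eq,
    Matrix.diag] using this

lemma psd_sub_scaled {σ P : Matrix (Fin n) (Fin n) ℂ} {r t : ℝ} (hr : 0 < r)
    (h : (((r:ℂ)) • σ - P).PosSemidef) (hP : P.PosSemidef) (ht : 0 ≤ t) (htr : t ≤ r⁻¹) :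
    (σ - ((t:ℝ) : ℂ) • P).PosSemidef := by
  have hid : ((r⁻¹ : ℝ) : ℂ) • ((r:ℂ) • σ - P) + (((r⁻¹ - t : ℝ)) : ℂ) • P
      = σ - ((t:ℝ) : ℂ) • P := by
    rw [smul_sub, smul_smul, ← Complex.ofReal_mul, inv_mul_cancel₀ hr.ne', Complex.ofReal_one,
      one_smul, Complex.ofReal_sub, sub_smul]
    abel
  rw [← hid]
  exact (smul_psd h (by rw [Complex.zero_le_real]; positivity)).add
    (smul_psd hP (by rw [Complex.zero_le_real]; linarith))


/-- (BFM objective Bayesian compatibility, quantum case.)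
Two density matrices `σ₁`, `σ₂` on `ℂⁿ` arise by quantum Bayesian conditioning (on
jointly possible outcomes `x₁`, `x₂`) from a common hybrid state over `X₁ × X₂` and `ℂⁿ`
if and only if their supports have nontrivial geometric intersection. -/
theorem quantum_objective_bayesian_compatibility
    {n : ℕ} (σ₁ σ₂ : Matrix (Fin n) (Fin n) ℂ)
    (hσ₁ : σ₁.PosSemidef) (htσ₁ : σ₁.trace = 1)
    (hσ₂ : σ₂.PosSemidef) (htσ₂ : σ₂.trace = 1) :
    (∃ (m k : ℕ) (ρ : Fin m → Fin k → Matrix (Fin n) (Fin n) ℂ) (x₁ : Fin m) (x₂ : Fin k),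
      (∀ a b, (ρ a b).PosSemidef) ∧
      (∑ a, ∑ b, (ρ a b).trace = 1) ∧
      ((ρ x₁ x₂).trace ≠ 0) ∧
      σ₁ = ((∑ b, ρ x₁ b).trace)⁻¹ • (∑ b, ρ x₁ b) ∧
      σ₂ = ((∑ a, ρ a x₂).trace)⁻¹ • (∑ a, ρ a x₂))
    ↔ LinearMap.range σ₁.mulVecLin ⊓ LinearMap.range σ₂.mulVecLin ≠ ⊥ := by
  constructor
  · rintro ⟨m, k, ρ, x₁, x₂, hpsd, htot, hτ, h1, h2⟩
    set τ := ρ x₁ x₂ with hτdef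
    set S₁ := ∑ b, ρ x₁ b with hS₁
    set S₂ := ∑ a, ρ a x₂ with hS₂
    -- τ has a nonzero diagonal entry
    have hdiag : ∃ i, τ i i ≠ 0 := by
      by_contra hall
      push_neg at hall
      exact hτ (by simp [Matrix.trace, Matrix.diag, hall])
    obtain ⟨i, hi⟩ := hdiag
    set u : Fin n → ℂ := Pi.single i 1 with hu
    set v : Fin n → ℂ := τ *ᵥ u with hvdef
    have hvi : v i = τ i i := by
      simp [hvdef, hu, Matrix.mulVec, dotProduct, Pi.single_apply]
    have hv0 : v ≠ 0 := fun h => hi (by rw [← hvi, h]; rfl)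
    -- S₁ - τ is PSD
    have hS₁psd : S₁.PosSemidef := psd_sum _ _ (fun b _ => hpsd x₁ b)
    have hS₂psd : S₂.PosSemidef := psd_sum _ _ (fun a _ => hpsd a x₂)
    have hS₁τ : (S₁ - τ).PosSemidef := by
      have : S₁ - τ = ∑ b ∈ Finset.univ.erase x₂, ρ x₁ b := by
        rw [hS₁, ← Finset.sum_erase_add Finset.univ _ (Finset.mem_univ x₂), ← hτdef,
          add_sub_cancel_right]
      rw [this]
      exact psd_sum _ _ (fun b _ => hpsd x₁ b)
    have hS₂τ : (S₂ - τ).PosSemidef := by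
      have : S₂ - τ = ∑ a ∈ Finset.univ.erase x₁, ρ a x₂ := by
        rw [hS₂, ← Finset.sum_erase_add Finset.univ _ (Finset.mem_univ x₁), ← hτdef,
          add_sub_cancel_right]
      rw [this]
      exact psd_sum _ _ (fun a _ => hpsd a x₂)
    -- traces nonzero
    have hc₁ : S₁.trace ≠ 0 := by
      intro h
      rw [h, _root_.inv_zero, zero_smul] at h1
      rw [h1] at htσ₁
      simp at htσ₁
    have hc₂ : S₂.trace ≠ 0 := by
      intro h
      rw [h, _root_.inv_zero, zero_smul] at h2
      rw [h2] at htσ₂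
      simp at htσ₂
    -- v in range σ₁
    have hrange : ∀ (σ S : Matrix (Fin n) (Fin n) ℂ), σ = (S.trace)⁻¹ • S → S.trace ≠ 0 →
        (S - τ).PosSemidef → S.PosSemidef → v ∈ LinearMap.range σ.mulVecLin := by
      intro σ S hσeq hc hSτ hSpsd
      have hvS : v ∈ LinearMap.range S.mulVecLin :=
        range_le_of_sub_psd (hpsd x₁ x₂) hSpsd hSτ ⟨u, rfl⟩
      obtain ⟨y, hy⟩ := hvS
      refine ⟨S.trace • y, ?_⟩
      show σ *ᵥ (S.trace • y) = v
      rw [hσeq, Matrix.smul_mulVec, Matrix.mulVec_smul, smul_smul,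
        inv_mul_cancel₀ hc, one_smul]
      exact hy
    intro hbot
    rw [Submodule.eq_bot_iff] at hbot
    exact hv0 (hbot v ⟨hrange σ₁ S₁ h1 hc₁ hS₁τ hS₁psd, hrange σ₂ S₂ h2 hc₂ hS₂τ hS₂psd⟩)
  · intro hne
    obtain ⟨v, hvmem, hv0⟩ := (Submodule.ne_bot_iff _).mp hne
    rw [Submodule.mem_inf] at hvmem
    obtain ⟨⟨w₁, hw₁⟩, ⟨w₂, hw₂⟩⟩ := hvmem
    have hw₁' : σ₁ *ᵥ w₁ = v := hw₁
    have hw₂' : σ₂ *ᵥ w₂ = v := hw₂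
    set P : Matrix (Fin n) (Fin n) ℂ := vecMulVec v (star v) with hPdef
    have hP : P.PosSemidef := vecMulVec_star_psd v
    -- scalars
    set c₁ : ℂ := star w₁ ⬝ᵥ σ₁ *ᵥ w₁ with hc₁def
    set c₂ : ℂ := star w₂ ⬝ᵥ σ₂ *ᵥ w₂ with hc₂def
    have hc₁0 : 0 ≤ c₁ := hσ₁.dotProduct_mulVec_nonneg w₁
    have hc₂0 : 0 ≤ c₂ := hσ₂.dotProduct_mulVec_nonneg w₂
    have hc₁ne : c₁ ≠ 0 := fun h => hv0 (by
      rw [← hw₁']; exact (hσ₁.dotProduct_mulVec_zero_iff w₁).mp h)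
    have hc₂ne : c₂ ≠ 0 := fun h => hv0 (by
      rw [← hw₂']; exact (hσ₂.dotProduct_mulVec_zero_iff w₂).mp h)
    set r₁ : ℝ := c₁.re with hr₁def
    set r₂ : ℝ := c₂.re with hr₂def
    have hc₁im : c₁.im = 0 := ((Complex.nonneg_iff).mp hc₁0).2.symm
    have hc₂im : c₂.im = 0 := ((Complex.nonneg_iff).mp hc₂0).2.symm
    have hc₁re : c₁ = (r₁ : ℂ) := Complex.ext (by simp [hr₁def]) (by simp [hc₁im])
    have hc₂re : c₂ = (r₂ : ℂ) := Complex.ext (by simp [hr₂def]) (by simp [hc₂im])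
    have hr₁pos : 0 < r₁ := lt_of_le_of_ne ((Complex.nonneg_iff).mp hc₁0).1
      (fun h => hc₁ne (Complex.ext h.symm hc₁im))
    have hr₂pos : 0 < r₂ := lt_of_le_of_ne ((Complex.nonneg_iff).mp hc₂0).1
      (fun h => hc₂ne (Complex.ext h.symm hc₂im))
    have key₁ : ((r₁ : ℂ) • σ₁ - P).PosSemidef := by
      have := key_cs hσ₁ w₁
      have hc₁v : c₁ = star w₁ ⬝ᵥ v := by rw [hc₁def, hw₁']
      rw [hw₁', ← hc₁v, hc₁re] at this
      exact this
    have key₂ : ((r₂ : ℂ) • σ₂ - P).PosSemidef := by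
      have := key_cs hσ₂ w₂
      have hc₂v : c₂ = star w₂ ⬝ᵥ v := by rw [hc₂def, hw₂']
      rw [hw₂', ← hc₂v, hc₂re] at this
      exact this
    -- trace of P
    set pc : ℂ := star v ⬝ᵥ v with hpcdef
    have hpc0 : 0 ≤ pc := dotProduct_star_self_nonneg v
    have hpcne : pc ≠ 0 := fun h => hv0 (dotProduct_star_self_eq_zero.mp h)
    set p : ℝ := pc.re with hpdef
    have hpcim : pc.im = 0 := ((Complex.nonneg_iff).mp hpc0).2.symm
    have hpcre : pc = (p : ℂ) := Complex.ext (by simp [hpdef]) (by simp [hpcim])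
    have hppos : 0 < p := lt_of_le_of_ne ((Complex.nonneg_iff).mp hpc0).1
      (fun h => hpcne (Complex.ext h.symm hpcim))
    have htrP : P.trace = pc := by
      simp [hPdef, Matrix.trace, Matrix.diag, vecMulVec_apply, hpcdef, dotProduct,
        mul_comm]
    -- the small parameter
    set s : ℝ := min r₁⁻¹ r₂⁻¹ / 3 with hsdef
    have hspos : 0 < s := by
      apply div_pos _ (by norm_num)
      exact lt_min (inv_pos.mpr hr₁pos) (inv_pos.mpr hr₂pos)
    have h3s₁ : 3 * s ≤ r₁⁻¹ := by
      rw [hsdef]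
      calc 3 * (min r₁⁻¹ r₂⁻¹ / 3) = min r₁⁻¹ r₂⁻¹ := by ring
      _ ≤ r₁⁻¹ := min_le_left _ _
    have h3s₂ : 3 * s ≤ r₂⁻¹ := by
      rw [hsdef]
      calc 3 * (min r₁⁻¹ r₂⁻¹ / 3) = min r₁⁻¹ r₂⁻¹ := by ring
      _ ≤ r₂⁻¹ := min_le_right _ _
    have hρ01 : (σ₁ - ((3 * s : ℝ) : ℂ) • P).PosSemidef :=
      psd_sub_scaled hr₁pos key₁ hP (by positivity) h3s₁
    have hρ10 : (σ₂ - ((3 * s : ℝ) : ℂ) • P).PosSemidef :=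
      psd_sub_scaled hr₂pos key₂ hP (by positivity) h3s₂
    refine ⟨2, 2,
      ![![((s : ℝ) : ℂ) • P, ((1/3 : ℝ) : ℂ) • (σ₁ - ((3 * s : ℝ) : ℂ) • P)],
        ![((1/3 : ℝ) : ℂ) • (σ₂ - ((3 * s : ℝ) : ℂ) • P),
          ((1/3 + s * p : ℝ) : ℂ) • σ₁]], 0, 0, ?_, ?_, ?_, ?_, ?_⟩
    · intro a b
      fin_cases a <;> fin_cases b <;>
        simp only [Matrix.cons_val', Matrix.cons_val_zero, Matrix.cons_val_one,
          Matrix.head_cons, Matrix.head_fin_const, Matrix.empty_val', Matrix.cons_val_fin_one]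
      · exact smul_psd hP (Complex.zero_le_real.mpr hspos.le)
      · exact smul_psd hρ01 (Complex.zero_le_real.mpr (by norm_num))
      · exact smul_psd hρ10 (Complex.zero_le_real.mpr (by norm_num))
      · exact smul_psd hσ₁ (Complex.zero_le_real.mpr (by positivity))
    · simp only [Fin.sum_univ_two, Matrix.cons_val', Matrix.cons_val_zero, Matrix.cons_val_one,
        Matrix.head_cons, Matrix.head_fin_const, Matrix.empty_val', Matrix.cons_val_fin_one,
        Matrix.trace_smul, Matrix.trace_sub, htσ₁, htσ₂, htrP, hpcre, smul_eq_mul]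
      push_cast
      ring
    · simp only [Matrix.cons_val', Matrix.cons_val_zero, Matrix.empty_val',
        Matrix.cons_val_fin_one, Matrix.trace_smul, htrP, hpcre, smul_eq_mul]
      exact mul_ne_zero (Complex.ofReal_ne_zero.mpr hspos.ne')
        (Complex.ofReal_ne_zero.mpr hppos.ne')
    · rw [Fin.sum_univ_two]
      simp only [Matrix.cons_val', Matrix.cons_val_zero, Matrix.cons_val_one,
        Matrix.head_cons, Matrix.head_fin_const, Matrix.empty_val', Matrix.cons_val_fin_one]
      have hsum : ((s : ℝ) : ℂ) • P + ((1/3 : ℝ) : ℂ) • (σ₁ - ((3 * s : ℝ) : ℂ) • P)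
          = ((1/3 : ℝ) : ℂ) • σ₁ := by
        match_scalars <;> push_cast <;> ring
      rw [hsum, Matrix.trace_smul, htσ₁, smul_eq_mul, mul_one, smul_smul]
      norm_num
    · rw [Fin.sum_univ_two]
      simp only [Matrix.cons_val', Matrix.cons_val_zero, Matrix.cons_val_one,
        Matrix.head_cons, Matrix.head_fin_const, Matrix.empty_val', Matrix.cons_val_fin_one]
      have hsum : ((s : ℝ) : ℂ) • P + ((1/3 : ℝ) : ℂ) • (σ₂ - ((3 * s : ℝ) : ℂ) • P)
          = ((1/3 : ℝ) : ℂ) • σ₂ := by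
        match_scalars <;> push_cast <;> ring
      rw [hsum, Matrix.trace_smul, htσ₂, smul_eq_mul, mul_one, smul_smul]
      norm_num
end

section
/- Let Y be a finite set and let Q₁ and Q₂ be probability distributions on Y. The following are equivalent: (i) there exist a finite set X and a likelihood function P(X|Y) (i.e., for each y ∈ Y a probability distribution P(·|Y=y) on X) and a value x ∈ X such that Σ_y P(X=x|Y=y)·Q_j(y) ≠ 0 for j = 1,2 and the posteriors agree: for all y ∈ Y, P(X=x|Y=y)·Q₁(y) / (Σ_{y′} P(X=x|Y=y′)·Q₁(y′)) = P(X=x|Y=y)·Q₂(y) / (Σ_{y′} P(X=x|Y=y′)·Q₂(y′)); (ii) supp[Q₁] ∩ supp[Q₂] ≠ ∅. -/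
open scoped BigOperators

/-- (Subjective Bayesian compatibility, classical case.)
Two probability distributions `Q₁`, `Q₂` on a finite set `Y` admit an experiment (a
likelihood function agreed upon by both agents) one of whose outcomes brings their
Bayesian posteriors into agreement if and only if their supports intersect. -/
theorem classical_subjective_bayesian_compatibility
    {Y : Type*} [Fintype Y]
    (Q₁ Q₂ : Y → ℝ)
    (hQ₁0 : ∀ y, 0 ≤ Q₁ y) (hQ₁1 : ∑ y, Q₁ y = 1)
    (hQ₂0 : ∀ y, 0 ≤ Q₂ y) (hQ₂1 : ∑ y, Q₂ y = 1) :
    (∃ (m : ℕ) (L : Fin m → Y → ℝ) (x : Fin m),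
      (∀ x' y, 0 ≤ L x' y) ∧
      (∀ y, ∑ x', L x' y = 1) ∧
      ((∑ y, L x y * Q₁ y) ≠ 0) ∧
      ((∑ y, L x y * Q₂ y) ≠ 0) ∧
      (∀ y, L x y * Q₁ y / (∑ y', L x y' * Q₁ y')
          = L x y * Q₂ y / (∑ y', L x y' * Q₂ y')))
    ↔ ∃ y, 0 < Q₁ y ∧ 0 < Q₂ y := by
  classical
  constructor
  · rintro ⟨m, L, x, hL0, hL1, hS1, hS2, heq⟩
    set S₁ := ∑ y, L x y * Q₁ y with hS₁def
    set S₂ := ∑ y, L x y * Q₂ y with hS₂def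
    have hS₁pos : 0 < S₁ :=
      lt_of_le_of_ne (Finset.sum_nonneg fun y _ => mul_nonneg (hL0 x y) (hQ₁0 y)) (Ne.symm hS1)
    have hS₂pos : 0 < S₂ :=
      lt_of_le_of_ne (Finset.sum_nonneg fun y _ => mul_nonneg (hL0 x y) (hQ₂0 y)) (Ne.symm hS2)
    have : ∃ y ∈ Finset.univ, (0:ℝ) < L x y * Q₁ y := by
      by_contra h
      push_neg at h
      have : S₁ ≤ 0 := Finset.sum_nonpos fun y hy => h y hy
      linarith
    obtain ⟨y, -, hy⟩ := this
    have hq1 : 0 < Q₁ y := by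
      rcases (hQ₁0 y).lt_or_eq with h | h
      · exact h
      · exfalso; rw [← h, mul_zero] at hy; exact lt_irrefl _ hy
    have h2 : 0 < L x y * Q₂ y / S₂ := by
      rw [← heq y]
      exact div_pos hy hS₁pos
    have hq2 : 0 < Q₂ y := by
      have hnum : 0 < L x y * Q₂ y := by
        by_contra h
        push_neg at h
        have : L x y * Q₂ y / S₂ ≤ 0 := div_nonpos_of_nonpos_of_nonneg h hS₂pos.le
        linarith
      rcases (hQ₂0 y).lt_or_eq with h | h
      · exact h
      · exfalso; rw [← h, mul_zero] at hnum; exact lt_irrefl _ hnum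
    exact ⟨y, hq1, hq2⟩
  · rintro ⟨y₀, h1, h2⟩
    refine ⟨2, fun x' y => if y = y₀ then (if x' = 0 then 1 else 0)
      else (if x' = 0 then 0 else 1), 0, ?_, ?_, ?_, ?_, ?_⟩
    · intro x' y
      dsimp only
      split <;> split <;> norm_num
    · intro y
      rw [Fin.sum_univ_two]
      by_cases hy : y = y₀ <;> simp [hy]
    · have : (∑ y, (if y = y₀ then (if (0:Fin 2) = 0 then (1:ℝ) else 0)
          else (if (0:Fin 2) = 0 then 0 else 1)) * Q₁ y) = Q₁ y₀ := by
        simp [Finset.sum_ite_eq']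
      rw [this]; exact ne_of_gt h1
    · have : (∑ y, (if y = y₀ then (if (0:Fin 2) = 0 then (1:ℝ) else 0)
          else (if (0:Fin 2) = 0 then 0 else 1)) * Q₂ y) = Q₂ y₀ := by
        simp [Finset.sum_ite_eq']
      rw [this]; exact ne_of_gt h2
    · intro y
      have e1 : (∑ y', (if y' = y₀ then (if (0:Fin 2) = 0 then (1:ℝ) else 0)
          else (if (0:Fin 2) = 0 then 0 else 1)) * Q₁ y') = Q₁ y₀ := by
        simp [Finset.sum_ite_eq']
      have e2 : (∑ y', (if y' = y₀ then (if (0:Fin 2) = 0 then (1:ℝ) else 0)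
          else (if (0:Fin 2) = 0 then 0 else 1)) * Q₂ y') = Q₂ y₀ := by
        simp [Finset.sum_ite_eq']
      rw [e1, e2]
      by_cases hy : y = y₀
      · subst hy
        simp [div_self (ne_of_gt h1), div_self (ne_of_gt h2)]
      · simp [hy]
end

section
/- Let ρ_{ABC} be a positive definite density matrix on ℂᵃ ⊗ ℂᵇ ⊗ ℂᶜ such that A and B are conditionally independent given C, i.e., (I_A ⊗ ρ_{BC}^{-1/2}) ρ_{ABC} (I_A ⊗ ρ_{BC}^{-1/2}) equals ρ_{A|C} := (I_A ⊗ ρ_C^{-1/2}) ρ_{AC} (I_A ⊗ ρ_C^{-1/2}) extended by the identity on the B factor. Then ρ_{AB|C} = ρ_{A|C} · ρ_{B|C}, where ρ_{AB|C} = (I_{AB} ⊗ ρ_C^{-1/2}) ρ_{ABC} (I_{AB} ⊗ ρ_C^{-1/2}), ρ_{B|C} = (I_B ⊗ ρ_C^{-1/2}) ρ_{BC} (I_B ⊗ ρ_C^{-1/2}), and on the right-hand side ρ_{A|C} and ρ_{B|C} are each extended by the identity on the missing tensor factor so that the product is an operator on ℂᵃ ⊗ ℂᵇ ⊗ ℂᶜ.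 -/
open scoped BigOperators ComplexOrder

noncomputable section

open Classical in
/-- The inverse positive square root `M^{-1/2}` of a matrix (defined to be `0` if `M` is
not positive semidefinite). -/
def invSqrt {d : Type*} [Fintype d] [DecidableEq d] (M : Matrix d d ℂ) :
    Matrix d d ℂ :=
  if h : M.PosSemidef then
    (h.1.eigenvectorUnitary.1 * Matrix.diagonal ((↑) ∘ (√·) ∘ h.1.eigenvalues) *
      (star h.1.eigenvectorUnitary : Matrix d d ℂ))⁻¹ else 0

variable {a b c : ℕ}

/-- Partial trace over the `A` factor. -/
def trA (ρ : Matrix (Fin a × Fin b × Fin c) (Fin a × Fin b × Fin c) ℂ) :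
    Matrix (Fin b × Fin c) (Fin b × Fin c) ℂ :=
  fun p q => ∑ i : Fin a, ρ (i, p) (i, q)

/-- Partial trace over the `B` factor. -/
def trB (ρ : Matrix (Fin a × Fin b × Fin c) (Fin a × Fin b × Fin c) ℂ) :
    Matrix (Fin a × Fin c) (Fin a × Fin c) ℂ :=
  fun p q => ∑ j : Fin b, ρ (p.1, j, p.2) (q.1, j, q.2)

/-- Partial trace over the `A` and `B` factors. -/
def trAB (ρ : Matrix (Fin a × Fin b × Fin c) (Fin a × Fin b × Fin c) ℂ) :
    Matrix (Fin c) (Fin c) ℂ :=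
  fun k l => ∑ i : Fin a, ∑ j : Fin b, ρ (i, j, k) (i, j, l)

/-- Extend an operator on `B ⊗ C` by the identity on the `A` factor. -/
def liftBC (N : Matrix (Fin b × Fin c) (Fin b × Fin c) ℂ) :
    Matrix (Fin a × Fin b × Fin c) (Fin a × Fin b × Fin c) ℂ :=
  fun p q => if p.1 = q.1 then N p.2 q.2 else 0

/-- Extend an operator on `A ⊗ C` by the identity on the `B` factor. -/
def liftAC (N : Matrix (Fin a × Fin c) (Fin a × Fin c) ℂ) :
    Matrix (Fin a × Fin b × Fin c) (Fin a × Fin b × Fin c) ℂ :=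
  fun p q => if p.2.1 = q.2.1 then N (p.1, p.2.2) (q.1, q.2.2) else 0

/-- Extend an operator on `C` by the identity on the `A` factor, inside `A ⊗ C`. -/
def liftC_AC (N : Matrix (Fin c) (Fin c) ℂ) :
    Matrix (Fin a × Fin c) (Fin a × Fin c) ℂ :=
  fun p q => if p.1 = q.1 then N p.2 q.2 else 0

/-- Extend an operator on `C` by the identity on the `B` factor, inside `B ⊗ C`. -/
def liftC_BC (N : Matrix (Fin c) (Fin c) ℂ) :
    Matrix (Fin b × Fin c) (Fin b × Fin c) ℂ :=
  fun p q => if p.1 = q.1 then N p.2 q.2 else 0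

/-- Extend an operator on `C` by the identity on the `A ⊗ B` factors. -/
def liftC_full (N : Matrix (Fin c) (Fin c) ℂ) :
    Matrix (Fin a × Fin b × Fin c) (Fin a × Fin b × Fin c) ℂ :=
  fun p q => if p.1 = q.1 ∧ p.2.1 = q.2.1 then N p.2.2 q.2.2 else 0

-- lift algebra lemmas
section
open Matrix
lemma liftBC_mul (M N : Matrix (Fin b × Fin c) (Fin b × Fin c) ℂ) :
    (liftBC (M * N) : Matrix (Fin a × Fin b × Fin c) _ ℂ) = liftBC M * liftBC N := by
  ext ⟨i, u⟩ ⟨i', u'⟩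
  simp [liftBC, Matrix.mul_apply, Fintype.sum_prod_type, ite_and, Finset.sum_ite_eq,
    mul_ite, ite_mul, zero_mul, mul_zero, Finset.sum_ite_irrel, Finset.sum_const_zero]

lemma liftAC_mul (M N : Matrix (Fin a × Fin c) (Fin a × Fin c) ℂ) :
    (liftAC (M * N) : Matrix (Fin a × Fin b × Fin c) _ ℂ) = liftAC M * liftAC N := by
  ext ⟨i, j, k⟩ ⟨i', j', k'⟩
  simp [liftAC, Matrix.mul_apply, Fintype.sum_prod_type, ite_and, Finset.sum_ite_eq,
    mul_ite, ite_mul, zero_mul, mul_zero, Finset.sum_ite_irrel, Finset.sum_const_zero]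

lemma liftC_AC_mul (M N : Matrix (Fin c) (Fin c) ℂ) :
    (liftC_AC (M * N) : Matrix (Fin a × Fin c) _ ℂ) = liftC_AC M * liftC_AC N := by
  ext ⟨i, k⟩ ⟨i', k'⟩
  simp [liftC_AC, Matrix.mul_apply, Fintype.sum_prod_type, ite_and, Finset.sum_ite_eq,
    mul_ite, ite_mul, zero_mul, mul_zero, Finset.sum_ite_irrel, Finset.sum_const_zero]

lemma liftAC_one : (liftAC (1 : Matrix (Fin a × Fin c) _ ℂ) :
    Matrix (Fin a × Fin b × Fin c) _ ℂ) = 1 := by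
  ext ⟨i, j, k⟩ ⟨i', j', k'⟩
  simp only [liftAC, Matrix.one_apply, Prod.ext_iff]
  by_cases h1 : i = i' <;> by_cases h2 : j = j' <;> by_cases h3 : k = k' <;> simp [h1, h2, h3]

lemma liftC_AC_one : (liftC_AC (1 : Matrix (Fin c) _ ℂ) : Matrix (Fin a × Fin c) _ ℂ) = 1 := by
  ext ⟨i, k⟩ ⟨i', k'⟩
  simp only [liftC_AC, Matrix.one_apply, Prod.ext_iff]
  by_cases h1 : i = i' <;> by_cases h3 : k = k' <;> simp [h1, h3]

lemma liftAC_conjTranspose (M : Matrix (Fin a × Fin c) (Fin a × Fin c) ℂ) :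
    (liftAC M : Matrix (Fin a × Fin b × Fin c) _ ℂ)ᴴ = liftAC Mᴴ := by
  ext ⟨i, j, k⟩ ⟨i', j', k'⟩
  simp [liftAC, Matrix.conjTranspose_apply, eq_comm]
  split <;> simp

lemma liftBC_conjTranspose (M : Matrix (Fin b × Fin c) (Fin b × Fin c) ℂ) :
    (liftBC M : Matrix (Fin a × Fin b × Fin c) _ ℂ)ᴴ = liftBC Mᴴ := by
  ext ⟨i, j, k⟩ ⟨i', j', k'⟩
  simp [liftBC, Matrix.conjTranspose_apply, eq_comm]
  split <;> simp

lemma liftC_AC_conjTranspose (M : Matrix (Fin c) (Fin c) ℂ) :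
    (liftC_AC M : Matrix (Fin a × Fin c) _ ℂ)ᴴ = liftC_AC Mᴴ := by
  ext ⟨i, k⟩ ⟨i', k'⟩
  simp [liftC_AC, Matrix.conjTranspose_apply, eq_comm]
  split <;> simp

lemma liftC_full_eq_AC (M : Matrix (Fin c) (Fin c) ℂ) :
    (liftC_full M : Matrix (Fin a × Fin b × Fin c) _ ℂ) = liftAC (liftC_AC M) := by
  ext ⟨i, j, k⟩ ⟨i', j', k'⟩
  simp [liftC_full, liftAC, liftC_AC, ite_and]
  by_cases h : j = j' <;> simp [h]

lemma liftC_full_eq_BC (M : Matrix (Fin c) (Fin c) ℂ) :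
    (liftC_full M : Matrix (Fin a × Fin b × Fin c) _ ℂ) = liftBC (liftC_BC M) := by
  ext ⟨i, j, k⟩ ⟨i', j', k'⟩
  simp [liftC_full, liftBC, liftC_BC, ite_and]

lemma trB_liftAC_mul (M : Matrix (Fin a × Fin c) (Fin a × Fin c) ℂ)
    (Y : Matrix (Fin a × Fin b × Fin c) (Fin a × Fin b × Fin c) ℂ) :
    trB (liftAC M * Y) = M * trB Y := by
  ext ⟨i, k⟩ ⟨i', k'⟩
  simp only [trB, liftAC, Matrix.mul_apply, Fintype.sum_prod_type, ite_mul, zero_mul,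
    Finset.sum_ite_irrel, Finset.sum_const_zero, Finset.sum_ite_eq, Finset.mem_univ, if_true]
  rw [Finset.sum_comm]
  refine Finset.sum_congr rfl fun j _ => ?_
  rw [Finset.sum_comm]
  simp_rw [Finset.mul_sum]

lemma trB_mul_liftAC (M : Matrix (Fin a × Fin c) (Fin a × Fin c) ℂ)
    (Y : Matrix (Fin a × Fin b × Fin c) (Fin a × Fin b × Fin c) ℂ) :
    trB (Y * liftAC M) = trB Y * M := by
  ext ⟨i, k⟩ ⟨i', k'⟩
  simp only [trB, liftAC, Matrix.mul_apply, Fintype.sum_prod_type, mul_ite, mul_zero,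
    Finset.sum_ite_irrel, Finset.sum_const_zero, Finset.sum_ite_eq', Finset.mem_univ, if_true]
  rw [Finset.sum_comm]
  refine Finset.sum_congr rfl fun j _ => ?_
  rw [Finset.sum_comm]
  simp_rw [Finset.sum_mul]

lemma trace_trB (Y : Matrix (Fin a × Fin b × Fin c) (Fin a × Fin b × Fin c) ℂ) :
    (trB Y).trace = Y.trace := by
  simp only [Matrix.trace, Matrix.diag, trB, Fintype.sum_prod_type]
  exact Finset.sum_congr rfl fun i _ => Finset.sum_comm

lemma trace_liftAC_mul (M : Matrix (Fin a × Fin c) (Fin a × Fin c) ℂ)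
    (Y : Matrix (Fin a × Fin b × Fin c) (Fin a × Fin b × Fin c) ℂ) :
    (liftAC M * Y).trace = (M * trB Y).trace := by
  rw [← trB_liftAC_mul, trace_trB]

lemma trB_liftBC_trA (ρ : Matrix (Fin a × Fin b × Fin c) (Fin a × Fin b × Fin c) ℂ) :
    trB (liftBC (trA ρ) : Matrix (Fin a × Fin b × Fin c) _ ℂ) = liftC_AC (trAB ρ) := by
  ext ⟨i, k⟩ ⟨i', k'⟩
  simp only [trB, liftBC, liftC_AC, trA, trAB]
  by_cases h : i = i'
  · simp only [h, if_true]
    rw [Finset.sum_comm]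
  · simp [h]

lemma trB_isHermitian {ρ : Matrix (Fin a × Fin b × Fin c) (Fin a × Fin b × Fin c) ℂ}
    (hρ : ρ.IsHermitian) : (trB ρ).IsHermitian := by
  ext ⟨i, k⟩ ⟨i', k'⟩
  simp only [Matrix.conjTranspose_apply, trB, map_sum]
  rw [star_sum]
  exact Finset.sum_congr rfl fun j _ => hρ.apply _ _

lemma star_ite (p : Prop) [Decidable p] (x y : ℂ) :
    star (if p then x else y) = if p then star x else star y := by split <;> rfl

lemma posDef_partial_fst {m n : Type*} [Fintype m] [Fintype n] [DecidableEq m] [DecidableEq n]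
    [Nonempty m] {M : Matrix (m × n) (m × n) ℂ} (hM : M.PosDef) :
    Matrix.PosDef (Matrix.of fun p q : n => ∑ i : m, M (i, p) (i, q)) := by
  refine Matrix.posDef_iff_dotProduct_mulVec.mpr ⟨?_, ?_⟩
  · ext p q
    simp only [Matrix.conjTranspose_apply, Matrix.of_apply, star_sum]
    exact Finset.sum_congr rfl fun i _ => hM.1.apply _ _
  · intro x hx
    have key : dotProduct (star x) ((Matrix.of fun p q : n => ∑ i : m, M (i, p) (i, q)) *ᵥ x)
        = ∑ i : m, dotProduct (star (fun p : m × n => if p.1 = i then x p.2 else 0))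
            (M *ᵥ (fun p : m × n => if p.1 = i then x p.2 else 0)) := by
      simp only [dotProduct, Matrix.mulVec, Pi.star_apply, Matrix.of_apply,
        Fintype.sum_prod_type, star_ite, star_zero, ite_mul, zero_mul, mul_ite, mul_zero,
        Finset.sum_ite_irrel, Finset.sum_const_zero, Finset.sum_ite_eq, Finset.sum_ite_eq',
        Finset.mem_univ, if_true, Finset.mul_sum, Finset.sum_mul]
      have : ∀ p : n, ∑ q : n, ∑ i : m, star (x p) * (M (i, p) (i, q) * x q)
          = ∑ i : m, ∑ q : n, star (x p) * (M (i, p) (i, q) * x q) := fun p => Finset.sum_comm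
      simp_rw [this]
      rw [Finset.sum_comm]
    rw [key]
    refine Finset.sum_pos (fun i _ => hM.dotProduct_mulVec_pos ?_) Finset.univ_nonempty
    obtain ⟨p0, hp0⟩ := Function.ne_iff.mp hx
    exact Function.ne_iff.mpr ⟨(i, p0), by simpa using hp0⟩
lemma posDef_trA {ρ : Matrix (Fin a × Fin b × Fin c) (Fin a × Fin b × Fin c) ℂ}
    [Nonempty (Fin a)] (hρ : ρ.PosDef) : (trA ρ).PosDef :=
  posDef_partial_fst hρ

lemma posDef_trAB {ρ : Matrix (Fin a × Fin b × Fin c) (Fin a × Fin b × Fin c) ℂ}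
    [Nonempty (Fin a)] [Nonempty (Fin b)] (hρ : ρ.PosDef) : (trAB ρ).PosDef := by
  have h1 : (trA ρ).PosDef := posDef_partial_fst hρ
  have h2 := posDef_partial_fst (m := Fin b) (n := Fin c) h1
  have : trAB ρ = Matrix.of fun k l : Fin c => ∑ j : Fin b, trA ρ (j, k) (j, l) := by
    ext k l
    simp only [trAB, trA, Matrix.of_apply]
    exact Finset.sum_comm
  rwa [this]

lemma eq_zero_of_trace_conjTranspose_mul_self {n : Type*} [Fintype n] [DecidableEq n]
    {A : Matrix n n ℂ} (h : (Aᴴ * A).trace = 0) : A = 0 := by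
  have h2 : ∑ j : n, ∑ i : n, Complex.normSq (A i j) = 0 := by
    have := congrArg Complex.re h
    simpa [Matrix.trace, Matrix.diag, Matrix.mul_apply, Matrix.conjTranspose_apply,
      Complex.re_sum, mul_comm, Complex.mul_conj, Complex.normSq] using this
  ext i j
  have hj := (Finset.sum_eq_zero_iff_of_nonneg (fun j _ => Finset.sum_nonneg
    (fun i _ => Complex.normSq_nonneg _))).mp h2 j (Finset.mem_univ j)
  have hi := (Finset.sum_eq_zero_iff_of_nonneg (fun i _ => Complex.normSq_nonneg _)).mp hj i
    (Finset.mem_univ i)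
  simpa using Complex.normSq_eq_zero.mp hi

lemma liftBC_one : (liftBC (1 : Matrix (Fin b × Fin c) _ ℂ) :
    Matrix (Fin a × Fin b × Fin c) _ ℂ) = 1 := by
  ext ⟨i, u⟩ ⟨i', u'⟩
  simp only [liftBC, Matrix.one_apply, Prod.ext_iff]
  by_cases h1 : i = i' <;> by_cases h2 : u = u' <;> simp [h1, h2]

/-- The core commutation argument (multiplicative-domain / Kadison–Schwarz trick). -/
lemma core_comm (R : Matrix (Fin b × Fin c) (Fin b × Fin c) ℂ)
    (X : Matrix (Fin a × Fin c) (Fin a × Fin c) ℂ) (s t : Matrix (Fin c) (Fin c) ℂ)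
    (hst : s * t = 1) (hts : t * s = 1)
    (hsh : sᴴ = s) (hth : tᴴ = t) (hRh : Rᴴ = R) (hXh : Xᴴ = X)
    (htrB_RXR : trB ((liftBC R : Matrix (Fin a × Fin b × Fin c) _ ℂ) * liftAC X * liftBC R)
      = liftC_AC s * X * liftC_AC s)
    (htrB_RR : trB ((liftBC R : Matrix (Fin a × Fin b × Fin c) _ ℂ) * liftBC R)
      = liftC_AC s * liftC_AC s) :
    ∀ Y : Matrix (Fin a × Fin b × Fin c) (Fin a × Fin b × Fin c) ℂ,
      (liftAC (liftC_AC t)) * ((liftBC R) * ((liftAC X) * Y)) = (liftAC X) * ((liftAC (liftC_AC t)) * ((liftBC R) * Y)) := by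
  have c1 : liftC_AC (a := a) t * liftC_AC s = 1 := by
    rw [← liftC_AC_mul, hts, liftC_AC_one]
  have c2 : liftC_AC (a := a) s * liftC_AC t = 1 := by
    rw [← liftC_AC_mul, hst, liftC_AC_one]
  have hfull_ts : ((liftAC (liftC_AC t)) : Matrix (Fin a × Fin b × Fin c) _ ℂ) * (liftAC (liftC_AC s)) = 1 := by
    rw [← liftAC_mul, c1, liftAC_one]
  have hfull_st : ((liftAC (liftC_AC s)) : Matrix (Fin a × Fin b × Fin c) _ ℂ) * (liftAC (liftC_AC t)) = 1 := by
    rw [← liftAC_mul, c2, liftAC_one]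
  have hTh2 : ((liftAC (liftC_AC t)) : Matrix (Fin a × Fin b × Fin c) _ ℂ)ᴴ = (liftAC (liftC_AC t)) := by
    rw [liftAC_conjTranspose, liftC_AC_conjTranspose, hth]
  have hSh2 : ((liftAC (liftC_AC s)) : Matrix (Fin a × Fin b × Fin c) _ ℂ)ᴴ = (liftAC (liftC_AC s)) := by
    rw [liftAC_conjTranspose, liftC_AC_conjTranspose, hsh]
  have hXXh : ((liftAC X) : Matrix (Fin a × Fin b × Fin c) _ ℂ)ᴴ = (liftAC X) := by
    rw [liftAC_conjTranspose, hXh]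
  have hRRh : ((liftBC R) : Matrix (Fin a × Fin b × Fin c) _ ℂ)ᴴ = (liftBC R) := by
    rw [liftBC_conjTranspose, hRh]
  have hCCH : (((liftAC X) : Matrix (Fin a × Fin b × Fin c) _ ℂ) * ((liftBC R) * (liftAC (liftC_AC t))) - (liftBC R) * (liftAC (liftC_AC t)) * (liftAC X))ᴴ
      = (liftAC (liftC_AC t)) * (liftBC R) * (liftAC X) - (liftAC X) * ((liftAC (liftC_AC t)) * (liftBC R)) := by
    simp only [Matrix.conjTranspose_sub, Matrix.conjTranspose_mul, hTh2, hRRh, hXXh]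
  have hT1 : (((liftAC (liftC_AC t)) : Matrix (Fin a × Fin b × Fin c) _ ℂ)
        * ((liftBC R) * ((liftAC X) * ((liftAC X) * ((liftBC R) * ((liftAC (liftC_AC t)) * ((liftAC (liftC_AC s)) * (liftAC (liftC_AC s))))))))).trace
      = (X * (X * (liftC_AC s * liftC_AC s))).trace := by
    have e1 : ((liftAC (liftC_AC t)) : Matrix (Fin a × Fin b × Fin c) _ ℂ) * ((liftAC (liftC_AC s)) * (liftAC (liftC_AC s))) = (liftAC (liftC_AC s)) := by
      rw [← Matrix.mul_assoc, hfull_ts, Matrix.one_mul]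
    rw [e1, Matrix.trace_mul_comm]
    simp only [Matrix.mul_assoc]
    rw [hfull_st, Matrix.mul_one, Matrix.trace_mul_comm]
    simp only [Matrix.mul_assoc]
    rw [trace_liftAC_mul, trB_liftAC_mul, htrB_RR]
  have hT2 : (((liftAC (liftC_AC t)) : Matrix (Fin a × Fin b × Fin c) _ ℂ)
        * ((liftBC R) * ((liftAC X) * ((liftBC R) * ((liftAC (liftC_AC t)) * ((liftAC X) * ((liftAC (liftC_AC s)) * (liftAC (liftC_AC s))))))))).trace
      = (X * (X * (liftC_AC s * liftC_AC s))).trace := by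
    have e2 : ((liftAC (liftC_AC t)) : Matrix (Fin a × Fin b × Fin c) _ ℂ) * ((liftAC X) * ((liftAC (liftC_AC s)) * (liftAC (liftC_AC s))))
        = liftAC (liftC_AC t * (X * (liftC_AC s * liftC_AC s))) := by
      simp only [← liftAC_mul]
    rw [e2, trace_liftAC_mul]
    have e3 : ((liftBC R) : Matrix (Fin a × Fin b × Fin c) _ ℂ) * ((liftAC X)
        * ((liftBC R) * liftAC (liftC_AC t * (X * (liftC_AC s * liftC_AC s)))))
        = ((liftBC R) * (liftAC X) * (liftBC R))
          * liftAC (liftC_AC t * (X * (liftC_AC s * liftC_AC s))) := by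
      simp only [Matrix.mul_assoc]
    rw [e3, trB_mul_liftAC, htrB_RXR]
    have e4 : liftC_AC t * (liftC_AC s * X * liftC_AC s
        * (liftC_AC t * (X * (liftC_AC s * liftC_AC s))))
        = (liftC_AC t * liftC_AC s) * X * (liftC_AC s * liftC_AC t)
          * X * (liftC_AC s * liftC_AC s) := by noncomm_ring
    rw [e4, c1, c2, Matrix.one_mul, Matrix.mul_one, Matrix.mul_assoc]
  have hT3 : (((liftAC X) : Matrix (Fin a × Fin b × Fin c) _ ℂ)
        * ((liftAC (liftC_AC t)) * ((liftBC R) * ((liftAC X) * ((liftBC R) * ((liftAC (liftC_AC t)) * ((liftAC (liftC_AC s)) * (liftAC (liftC_AC s))))))))).trace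
      = (X * (X * (liftC_AC s * liftC_AC s))).trace := by
    have e1 : ((liftAC (liftC_AC t)) : Matrix (Fin a × Fin b × Fin c) _ ℂ) * ((liftAC (liftC_AC s)) * (liftAC (liftC_AC s))) = (liftAC (liftC_AC s)) := by
      rw [← Matrix.mul_assoc, hfull_ts, Matrix.one_mul]
    rw [e1, trace_liftAC_mul]
    have e3 : ((liftAC (liftC_AC t)) : Matrix (Fin a × Fin b × Fin c) _ ℂ)
        * ((liftBC R) * ((liftAC X) * ((liftBC R) * (liftAC (liftC_AC s)))))
        = (liftAC (liftC_AC t)) * (((liftBC R) * (liftAC X) * (liftBC R)) * (liftAC (liftC_AC s))) := by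
      simp only [Matrix.mul_assoc]
    rw [e3, trB_liftAC_mul, trB_mul_liftAC, htrB_RXR]
    have e4 : X * (liftC_AC t * (liftC_AC s * X * liftC_AC s * liftC_AC s))
        = X * ((liftC_AC t * liftC_AC s) * X * (liftC_AC s * liftC_AC s)) := by
      noncomm_ring
    rw [e4, c1, Matrix.one_mul]
  have hT4 : (((liftAC X) : Matrix (Fin a × Fin b × Fin c) _ ℂ)
        * ((liftAC (liftC_AC t)) * ((liftBC R) * ((liftBC R) * ((liftAC (liftC_AC t)) * ((liftAC X) * ((liftAC (liftC_AC s)) * (liftAC (liftC_AC s))))))))).trace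
      = (X * (X * (liftC_AC s * liftC_AC s))).trace := by
    have e2 : ((liftAC (liftC_AC t)) : Matrix (Fin a × Fin b × Fin c) _ ℂ) * ((liftAC X) * ((liftAC (liftC_AC s)) * (liftAC (liftC_AC s))))
        = liftAC (liftC_AC t * (X * (liftC_AC s * liftC_AC s))) := by
      simp only [← liftAC_mul]
    rw [e2, trace_liftAC_mul]
    have e3 : ((liftAC (liftC_AC t)) : Matrix (Fin a × Fin b × Fin c) _ ℂ)
        * ((liftBC R) * ((liftBC R) * liftAC (liftC_AC t * (X * (liftC_AC s * liftC_AC s)))))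
        = (liftAC (liftC_AC t)) * (((liftBC R) * (liftBC R)) * liftAC (liftC_AC t * (X * (liftC_AC s * liftC_AC s)))) := by
      simp only [Matrix.mul_assoc]
    rw [e3, trB_liftAC_mul, trB_mul_liftAC, htrB_RR]
    have e4 : X * (liftC_AC t * (liftC_AC s * liftC_AC s
          * (liftC_AC t * (X * (liftC_AC s * liftC_AC s)))))
        = X * ((liftC_AC t * liftC_AC s) * ((liftC_AC s * liftC_AC t)
            * (X * (liftC_AC s * liftC_AC s)))) := by noncomm_ring
    rw [e4, c1, c2, Matrix.one_mul, Matrix.one_mul]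
  have hmain : (((liftAC X) * ((liftBC R) * (liftAC (liftC_AC t))) - (liftBC R) * (liftAC (liftC_AC t)) * (liftAC X))ᴴ
      * (((liftAC X) : Matrix (Fin a × Fin b × Fin c) _ ℂ) * ((liftBC R) * (liftAC (liftC_AC t))) - (liftBC R) * (liftAC (liftC_AC t)) * (liftAC X))
      * ((liftAC (liftC_AC s)) * (liftAC (liftC_AC s)))).trace = 0 := by
    have hexp : (((liftAC X) : Matrix (Fin a × Fin b × Fin c) _ ℂ) * ((liftBC R) * (liftAC (liftC_AC t))) - (liftBC R) * (liftAC (liftC_AC t)) * (liftAC X))ᴴ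
        * ((liftAC X) * ((liftBC R) * (liftAC (liftC_AC t))) - (liftBC R) * (liftAC (liftC_AC t)) * (liftAC X)) * ((liftAC (liftC_AC s)) * (liftAC (liftC_AC s)))
        = (liftAC (liftC_AC t)) * ((liftBC R) * ((liftAC X) * ((liftAC X) * ((liftBC R) * ((liftAC (liftC_AC t)) * ((liftAC (liftC_AC s)) * (liftAC (liftC_AC s))))))))
          - (liftAC (liftC_AC t)) * ((liftBC R) * ((liftAC X) * ((liftBC R) * ((liftAC (liftC_AC t)) * ((liftAC X) * ((liftAC (liftC_AC s)) * (liftAC (liftC_AC s))))))))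
          - (liftAC X) * ((liftAC (liftC_AC t)) * ((liftBC R) * ((liftAC X) * ((liftBC R) * ((liftAC (liftC_AC t)) * ((liftAC (liftC_AC s)) * (liftAC (liftC_AC s))))))))
          + (liftAC X) * ((liftAC (liftC_AC t)) * ((liftBC R) * ((liftBC R) * ((liftAC (liftC_AC t)) * ((liftAC X) * ((liftAC (liftC_AC s)) * (liftAC (liftC_AC s)))))))) := by
      rw [hCCH]; noncomm_ring
    rw [hexp, Matrix.trace_add, Matrix.trace_sub, Matrix.trace_sub, hT1, hT2, hT3, hT4]
    ring
  have hCS : (((((liftAC X) : Matrix (Fin a × Fin b × Fin c) _ ℂ) * ((liftBC R) * (liftAC (liftC_AC t))) - (liftBC R) * (liftAC (liftC_AC t)) * (liftAC X)) * (liftAC (liftC_AC s)))ᴴ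
      * ((((liftAC X) : Matrix (Fin a × Fin b × Fin c) _ ℂ) * ((liftBC R) * (liftAC (liftC_AC t))) - (liftBC R) * (liftAC (liftC_AC t)) * (liftAC X)) * (liftAC (liftC_AC s)))).trace
      = 0 := by
    have e : ((((liftAC X) : Matrix (Fin a × Fin b × Fin c) _ ℂ) * ((liftBC R) * (liftAC (liftC_AC t))) - (liftBC R) * (liftAC (liftC_AC t)) * (liftAC X)) * (liftAC (liftC_AC s)))ᴴ
        * (((liftAC X) * ((liftBC R) * (liftAC (liftC_AC t))) - (liftBC R) * (liftAC (liftC_AC t)) * (liftAC X)) * (liftAC (liftC_AC s)))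
        = (liftAC (liftC_AC s)) * (((liftAC X) * ((liftBC R) * (liftAC (liftC_AC t))) - (liftBC R) * (liftAC (liftC_AC t)) * (liftAC X))ᴴ
          * ((liftAC X) * ((liftBC R) * (liftAC (liftC_AC t))) - (liftBC R) * (liftAC (liftC_AC t)) * (liftAC X)) * (liftAC (liftC_AC s))) := by
      rw [Matrix.conjTranspose_mul, hSh2]; noncomm_ring
    rw [e, Matrix.trace_mul_comm]
    have e2 : (((liftAC X) : Matrix (Fin a × Fin b × Fin c) _ ℂ) * ((liftBC R) * (liftAC (liftC_AC t))) - (liftBC R) * (liftAC (liftC_AC t)) * (liftAC X))ᴴ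
        * ((liftAC X) * ((liftBC R) * (liftAC (liftC_AC t))) - (liftBC R) * (liftAC (liftC_AC t)) * (liftAC X)) * (liftAC (liftC_AC s)) * (liftAC (liftC_AC s))
        = ((liftAC X) * ((liftBC R) * (liftAC (liftC_AC t))) - (liftBC R) * (liftAC (liftC_AC t)) * (liftAC X))ᴴ
        * ((liftAC X) * ((liftBC R) * (liftAC (liftC_AC t))) - (liftBC R) * (liftAC (liftC_AC t)) * (liftAC X)) * ((liftAC (liftC_AC s)) * (liftAC (liftC_AC s))) := by
      rw [Matrix.mul_assoc]
    rw [e2, hmain]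
  have hCS0 : (((liftAC X) : Matrix (Fin a × Fin b × Fin c) _ ℂ) * ((liftBC R) * (liftAC (liftC_AC t))) - (liftBC R) * (liftAC (liftC_AC t)) * (liftAC X)) * (liftAC (liftC_AC s))
      = 0 := eq_zero_of_trace_conjTranspose_mul_self hCS
  have hCC0 : (((liftAC X) : Matrix (Fin a × Fin b × Fin c) _ ℂ) * ((liftBC R) * (liftAC (liftC_AC t))) - (liftBC R) * (liftAC (liftC_AC t)) * (liftAC X)) = 0 := by
    have h5 := congrArg (· * (liftAC (liftC_AC t))) hCS0
    simp only [Matrix.mul_assoc, hfull_st, Matrix.mul_one, Matrix.zero_mul] at h5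
    simpa [Matrix.mul_assoc] using h5
  have hcomm : ((liftAC X) : Matrix (Fin a × Fin b × Fin c) _ ℂ) * ((liftBC R) * (liftAC (liftC_AC t))) = (liftBC R) * (liftAC (liftC_AC t)) * (liftAC X) :=
    sub_eq_zero.mp hCC0
  have hcomm2 : ((liftAC (liftC_AC t)) : Matrix (Fin a × Fin b × Fin c) _ ℂ) * (liftBC R) * (liftAC X) = (liftAC X) * ((liftAC (liftC_AC t)) * (liftBC R)) := by
    have h6 := congrArg Matrix.conjTranspose hcomm
    rw [Matrix.conjTranspose_mul, Matrix.conjTranspose_mul, Matrix.conjTranspose_mul,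
      Matrix.conjTranspose_mul, hTh2, hRRh, hXXh] at h6
    calc ((liftAC (liftC_AC t)) : Matrix (Fin a × Fin b × Fin c) _ ℂ) * (liftBC R) * (liftAC X)
        = (liftAC (liftC_AC t)) * (liftBC R) * (liftAC X) := rfl
      _ = (liftAC X) * ((liftAC (liftC_AC t)) * (liftBC R)) := by
          rw [Matrix.mul_assoc] at h6 ⊢
          exact h6.symm ▸ rfl
  intro Y
  calc ((liftAC (liftC_AC t)) : Matrix (Fin a × Fin b × Fin c) _ ℂ) * ((liftBC R) * ((liftAC X) * Y))
      = ((liftAC (liftC_AC t)) * (liftBC R) * (liftAC X)) * Y := by simp only [Matrix.mul_assoc]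
    _ = ((liftAC X) * ((liftAC (liftC_AC t)) * (liftBC R))) * Y := by rw [hcomm2]
    _ = (liftAC X) * ((liftAC (liftC_AC t)) * ((liftBC R) * Y)) := by simp only [Matrix.mul_assoc]

lemma invSqrt_spec {d : Type*} [Fintype d] [DecidableEq d] {M : Matrix d d ℂ} (hM : M.PosDef) :
    ∃ R : Matrix d d ℂ, invSqrt M = R⁻¹ ∧ R * R = M ∧ Rᴴ = R ∧ R * R⁻¹ = 1 ∧ R⁻¹ * R = 1
      ∧ (R⁻¹)ᴴ = R⁻¹ := by
  have hH : M.IsHermitian := hM.posSemidef.1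
  have hRdef : hH.eigenvectorUnitary.1 * Matrix.diagonal ((↑) ∘ (√·) ∘ hH.eigenvalues) *
      (star hH.eigenvectorUnitary : Matrix d d ℂ) = cfc (fun x : ℝ => √x) M := by
    rw [hH.cfc_eq, Matrix.IsHermitian.cfc, Unitary.conjStarAlgAut_apply]
    rfl
  have hRR : cfc (fun x : ℝ => √x) M * cfc (fun x : ℝ => √x) M = M := by
    rw [← cfc_mul (fun x : ℝ => √x) (fun x : ℝ => √x) M]
    conv_rhs => rw [← cfc_id' ℝ M]
    refine cfc_congr fun x hx => ?_
    rw [hH.spectrum_real_eq_range_eigenvalues] at hx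
    obtain ⟨i, rfl⟩ := hx
    exact Real.mul_self_sqrt (hM.eigenvalues_pos i).le
  have hRh : (cfc (fun x : ℝ => √x) M)ᴴ = cfc (fun x : ℝ => √x) M :=
    (cfc_predicate (fun x : ℝ => √x) M : IsSelfAdjoint _)
  have hRdet : IsUnit (cfc (fun x : ℝ => √x) M).det := by
    have h1 : (0 : ℂ) < M.det := hM.det_pos
    rw [← hRR, Matrix.det_mul] at h1
    exact isUnit_iff_ne_zero.mpr (mul_self_ne_zero.mp h1.ne')
  refine ⟨cfc (fun x : ℝ => √x) M, ?_, hRR, hRh, Matrix.mul_nonsing_inv _ hRdet,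
    Matrix.nonsing_inv_mul _ hRdet, ?_⟩
  · rw [invSqrt, dif_pos hM.posSemidef, hRdef]
  · rw [Matrix.conjTranspose_nonsing_inv, hRh]



/-- If `A` and `B` are conditionally independent given `C` for a
positive definite tripartite density matrix `ρ_{ABC}` (i.e. `ρ_{A|BC} = ρ_{A|C} ⊗ I_B`),
then `ρ_{AB|C} = ρ_{A|C} · ρ_{B|C}` (each conditional extended by the identity on the
missing factor). -/
theorem quantum_conditional_independence_product
    (ρ : Matrix (Fin a × Fin b × Fin c) (Fin a × Fin b × Fin c) ℂ)
    (hρ : ρ.PosDef) (htr : ρ.trace = 1)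
    (hCI : liftBC (invSqrt (trA ρ)) * ρ * liftBC (invSqrt (trA ρ))
        = liftAC (liftC_AC (invSqrt (trAB ρ)) * trB ρ * liftC_AC (invSqrt (trAB ρ)))) :
    liftC_full (invSqrt (trAB ρ)) * ρ * liftC_full (invSqrt (trAB ρ))
      = liftAC (liftC_AC (invSqrt (trAB ρ)) * trB ρ * liftC_AC (invSqrt (trAB ρ)))
        * liftBC (liftC_BC (invSqrt (trAB ρ)) * trA ρ * liftC_BC (invSqrt (trAB ρ))) := by
  have hne : Nonempty (Fin a × Fin b × Fin c) := by
    by_contra h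
    rw [not_nonempty_iff] at h
    rw [Matrix.trace_eq_zero_of_isEmpty] at htr
    exact zero_ne_one htr
  haveI hNa : Nonempty (Fin a) := hne.map fun p => p.1
  haveI hNb : Nonempty (Fin b) := hne.map fun p => p.2.1
  have hσ : (trA ρ).PosDef := posDef_trA hρ
  have hρC : (trAB ρ).PosDef := posDef_trAB hρ
  obtain ⟨R, hSdef, hRR, hRh, hRS, hSR, hSh⟩ := invSqrt_spec hσ
  obtain ⟨r, hTdef, hrr, hrh, hrT, hTr, hTh⟩ := invSqrt_spec hρC
  rw [hSdef, hTdef] at hCI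
  rw [hTdef]
  have hρeq : (liftBC R : Matrix (Fin a × Fin b × Fin c) _ ℂ)
      * liftAC (liftC_AC r⁻¹ * trB ρ * liftC_AC r⁻¹) * liftBC R = ρ := by
    rw [← hCI]
    calc (liftBC R : Matrix (Fin a × Fin b × Fin c) _ ℂ)
          * (liftBC R⁻¹ * ρ * liftBC R⁻¹) * liftBC R
        = (liftBC R * liftBC R⁻¹) * ρ * (liftBC R⁻¹ * liftBC R) := by noncomm_ring
      _ = ρ := by
          rw [← liftBC_mul, ← liftBC_mul, hRS, hSR, liftBC_one, Matrix.one_mul, Matrix.mul_one]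
  have htrBh : (trB ρ)ᴴ = trB ρ := trB_isHermitian hρ.1
  have hXherm : (liftC_AC (a := a) r⁻¹ * trB ρ * liftC_AC r⁻¹)ᴴ
      = liftC_AC r⁻¹ * trB ρ * liftC_AC r⁻¹ := by
    rw [Matrix.conjTranspose_mul, Matrix.conjTranspose_mul, liftC_AC_conjTranspose, hTh, htrBh]
    noncomm_ring
  have htrB_RR : trB ((liftBC R : Matrix (Fin a × Fin b × Fin c) _ ℂ) * liftBC R)
      = liftC_AC r * liftC_AC r := by
    rw [← liftBC_mul, hRR, trB_liftBC_trA, ← hrr, liftC_AC_mul]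
  have htrB_RXR : trB ((liftBC R : Matrix (Fin a × Fin b × Fin c) _ ℂ)
        * liftAC (liftC_AC r⁻¹ * trB ρ * liftC_AC r⁻¹) * liftBC R)
      = liftC_AC r * (liftC_AC r⁻¹ * trB ρ * liftC_AC r⁻¹) * liftC_AC r := by
    rw [hρeq]
    calc trB ρ
        = (liftC_AC r * liftC_AC r⁻¹) * trB ρ * (liftC_AC r⁻¹ * liftC_AC r) := by
          rw [← liftC_AC_mul, ← liftC_AC_mul, hrT, hTr, liftC_AC_one, Matrix.one_mul,
            Matrix.mul_one]
      _ = liftC_AC r * (liftC_AC r⁻¹ * trB ρ * liftC_AC r⁻¹) * liftC_AC r := by noncomm_ring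
  have hcomm := core_comm R (liftC_AC r⁻¹ * trB ρ * liftC_AC r⁻¹) r r⁻¹ hrT hTr hrh hTh hRh
    hXherm htrB_RXR htrB_RR
  have hRHS : (liftBC (liftC_BC r⁻¹ * trA ρ * liftC_BC r⁻¹)
        : Matrix (Fin a × Fin b × Fin c) _ ℂ)
      = liftAC (liftC_AC r⁻¹) * (liftBC R * liftBC R) * liftAC (liftC_AC r⁻¹) := by
    rw [liftBC_mul, liftBC_mul, ← liftC_full_eq_BC, liftC_full_eq_AC, ← hRR, liftBC_mul]
  rw [liftC_full_eq_AC]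
  conv_lhs => rw [← hρeq]
  rw [hRHS]
  simp only [Matrix.mul_assoc] at hcomm ⊢
  rw [hcomm]

end
end
end

section
/- Let P be a joint probability distribution on finite sets X × Y and let t : X → T (T finite) be a sufficient statistic for X with respect to Y. Then t is minimal (i.e., for every finite set S and every sufficient statistic s : X → S there is a function f : S → T with t(x) = f(s(x)) for all x with P(X=x) > 0) if and only if for all x, x′ with P(X=x) > 0 and P(X=x′) > 0: t(x) = t(x′) ⟺ P(Y=·|X=x) = P(Y=·|X=x′). -/
open scoped BigOperators
open Classical

noncomputable section

/-- The marginal probability `P(X=x)` of a joint distribution on `X × Y`. -/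
def margX {X Y : Type*} [Fintype Y] (P : X → Y → ℝ) (x : X) : ℝ :=
  ∑ y, P x y

/-- The conditional distribution `P(Y=y|X=x)`. -/
def condY {X Y : Type*} [Fintype Y] (P : X → Y → ℝ) (x : X) (y : Y) : ℝ :=
  P x y / margX P x

/-- The conditional distribution `P(Y=y|t(X)=a)` obtained by coarse-graining `X` by the
statistic `t`. -/
def condYOf {X Y : Type*} [Fintype X] [Fintype Y] (P : X → Y → ℝ)
    {T : Type*} (t : X → T) (a : T) (y : Y) : ℝ :=
  (∑ x, if t x = a then P x y else 0) / (∑ x, if t x = a then margX P x else 0)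

/-- `t` is a sufficient statistic for `X` with respect to `Y`:
`P(Y=·|t(X)=t(x)) = P(Y=·|X=x)` for every `x` with `P(X=x) > 0`. -/
def Sufficient {X Y : Type*} [Fintype X] [Fintype Y] (P : X → Y → ℝ)
    {T : Type*} (t : X → T) : Prop :=
  ∀ x, 0 < margX P x → ∀ y, condYOf P t (t x) y = condY P x y

lemma margX_nonneg {X Y : Type*} [Fintype Y] (P : X → Y → ℝ)
    (hP0 : ∀ x y, 0 ≤ P x y) (x : X) : 0 ≤ margX P x :=
  Finset.sum_nonneg fun y _ => hP0 x y

lemma P_eq_zero {X Y : Type*} [Fintype Y] (P : X → Y → ℝ)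
    (hP0 : ∀ x y, 0 ≤ P x y) {x : X} (hx : margX P x = 0) (y : Y) : P x y = 0 :=
  (Finset.sum_eq_zero_iff_of_nonneg (fun y _ => hP0 x y)).mp hx y (Finset.mem_univ y)

/-- Any statistic whose classes refine the `condY` classes is sufficient. -/
lemma sufficient_of_classes {X Y S : Type*} [Fintype X] [Fintype Y]
    (P : X → Y → ℝ) (hP0 : ∀ x y, 0 ≤ P x y) (s : X → S)
    (h : ∀ x x', 0 < margX P x → 0 < margX P x' → s x' = s x →
      ∀ y, condY P x' y = condY P x y) :
    Sufficient P s := by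
  intro x hx y
  have hterm : ∀ x', (if s x' = s x then P x' y else 0)
      = condY P x y * (if s x' = s x then margX P x' else 0) := by
    intro x'
    by_cases hsx : s x' = s x
    · simp only [if_pos hsx]
      rcases (margX_nonneg P hP0 x').lt_or_eq.symm with h0 | h0
      · rw [← h0, mul_zero]
        exact P_eq_zero P hP0 h0.symm y
      · rw [← h x x' hx h0 hsx y]
        unfold condY
        field_simp
    · simp [hsx]
  have hD : 0 < ∑ x', if s x' = s x then margX P x' else 0 := by
    apply Finset.sum_pos'
    · intro x' _
      split
      · exact margX_nonneg P hP0 x'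
      · exact le_rfl
    · exact ⟨x, Finset.mem_univ x, by simp [hx]⟩
  unfold condYOf
  rw [Finset.sum_congr rfl (fun x' _ => hterm x'), ← Finset.mul_sum,
    mul_div_assoc, div_self hD.ne', mul_one]

/-- A sufficient statistic `t : X → T` for `X` with respect to `Y` is
minimal (a function of every other sufficient statistic, on the support of `P(X)`) if and
only if, on the support of `P(X)`, `t(x) = t(x')` exactly when the conditional
distributions `P(Y=·|X=x)` and `P(Y=·|X=x')` coincide. -/
theorem minimal_sufficient_statistic_iff
    {X Y : Type*} [Fintype X] [Fintype Y]
    (P : X → Y → ℝ)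
    (hP0 : ∀ x y, 0 ≤ P x y)
    (hP1 : ∑ x, ∑ y, P x y = 1)
    {T : Type*} [Fintype T] (t : X → T)
    (ht : Sufficient P t) :
    (∀ (S : Type) [Fintype S] (s : X → S), Sufficient P s →
      ∃ f : S → T, ∀ x, 0 < margX P x → t x = f (s x))
    ↔ (∀ x x', 0 < margX P x → 0 < margX P x' →
        (t x = t x' ↔ ∀ y, condY P x y = condY P x' y)) := by
  constructor
  · intro hmin x x' hx hx'
    constructor
    · intro hte y
      rw [← ht x hx y, ← ht x' hx' y, hte]
    · intro hcond
      -- canonical statistic with values in Fin n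
      set g : X → Y → ℝ := condY P with hg
      have : Fintype (Set.range g) := Set.fintypeRange g
      set e := Fintype.equivFin (Set.range g) with he
      set s : X → Fin (Fintype.card (Set.range g)) :=
        fun x => e ⟨g x, Set.mem_range_self x⟩ with hs
      have hskey : ∀ a b : X, s a = s b ↔ g a = g b := by
        intro a b
        constructor
        · intro hab
          have := e.injective hab
          exact Subtype.ext_iff.mp this
        · intro hab
          simp [hs, hab]
      have hsuff : Sufficient P s :=
        sufficient_of_classes P hP0 s (fun a b _ _ hab y =>
          congrFun ((hskey b a).mp hab) y)
      obtain ⟨f, hf⟩ := hmin _ s hsuff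
      have hsx : s x = s x' := (hskey x x').mpr (funext hcond)
      rw [hf x hx, hf x' hx', hsx]
  · intro hiff S _ s hs
    have hne : Nonempty X := by
      rcases isEmpty_or_nonempty X with h | h
      · rw [Finset.univ_eq_empty, Finset.sum_empty] at hP1
        norm_num at hP1
      · exact h
    refine ⟨fun a => if h : ∃ x, 0 < margX P x ∧ s x = a then t h.choose
      else t (Classical.arbitrary X), ?_⟩
    intro x hx
    have hex : ∃ x', 0 < margX P x' ∧ s x' = s x := ⟨x, hx, rfl⟩
    show t x = if h : ∃ x', 0 < margX P x' ∧ s x' = s x then t h.choose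
      else t (Classical.arbitrary X)
    rw [dif_pos hex]
    obtain ⟨hc1, hc2⟩ := hex.choose_spec
    refine (hiff x hex.choose hx hc1).mpr fun y => ?_
    rw [← hs x hx y, ← hs hex.choose hc1 y, hc2]


end
end

section
/- Let X be a finite set, let (ρ_x)_{x∈X} be a hybrid state over X and ℂⁿ, and let t : X → T (T finite) be a sufficient statistic for X with respect to the quantum region B. Then t is minimal (i.e., for every finite set S and every sufficient statistic s : X → S there is a function f : S → T with t(x) = f(s(x)) for all x with tr(ρ_x) > 0) if and only if for all x, x′ with tr(ρ_x) > 0 and tr(ρ_{x′}) > 0: t(x) = t(x′) ⟺ ρ_{B|X=x} = ρ_{B|X=x′}. -/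
open scoped BigOperators ComplexOrder
open Classical

noncomputable section

/-- The conditional state `ρ_{B|X=x} = ρ_x / tr(ρ_x)` of a hybrid state. -/
def qcond {X : Type*} {n : ℕ} (ρ : X → Matrix (Fin n) (Fin n) ℂ) (x : X) :
    Matrix (Fin n) (Fin n) ℂ :=
  ((ρ x).trace)⁻¹ • ρ x

/-- The coarse-grained conditional state `ρ_{B|t(X)=a}` of a hybrid state. -/
def qcondOf {X : Type*} [Fintype X] {n : ℕ} (ρ : X → Matrix (Fin n) (Fin n) ℂ)
    {T : Type*} (t : X → T) (a : T) : Matrix (Fin n) (Fin n) ℂ :=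
  (∑ x, if t x = a then (ρ x).trace else 0)⁻¹ • (∑ x, if t x = a then ρ x else 0)

/-- `t` is a sufficient statistic for `X` with respect to the quantum region `B`:
`ρ_{B|t(X)=t(x)} = ρ_{B|X=x}` for every `x` with `tr(ρ_x) ≠ 0`. -/
def QSufficient {X : Type*} [Fintype X] {n : ℕ} (ρ : X → Matrix (Fin n) (Fin n) ℂ)
    {T : Type*} (t : X → T) : Prop :=
  ∀ x, (ρ x).trace ≠ 0 → qcondOf ρ t (t x) = qcond ρ x

open scoped MatrixOrder in
lemma psd_exists_conjTranspose_mul_self {n : ℕ} {A : Matrix (Fin n) (Fin n) ℂ}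
    (h : A.PosSemidef) : ∃ B : Matrix (Fin n) (Fin n) ℂ, A = B.conjTranspose * B := by
  obtain ⟨X, hX, -, hXX⟩ :=
    CFC.exists_sqrt_of_isSelfAdjoint_of_quasispectrumRestricts h.isHermitian
      (QuasispectrumRestricts.nnreal_of_nonneg h.nonneg)
  refine ⟨X, ?_⟩
  rw [← hXX]
  congr 1
  exact hX.star_eq.symm

lemma psd_trace_nonneg {n : ℕ} {A : Matrix (Fin n) (Fin n) ℂ} (h : A.PosSemidef) :
    0 ≤ A.trace := by
  obtain ⟨B, rfl⟩ := psd_exists_conjTranspose_mul_self h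
  refine Finset.sum_nonneg fun i _ => ?_
  rw [Matrix.diag_apply, Matrix.mul_apply]
  exact Finset.sum_nonneg fun j _ => by
    rw [Matrix.conjTranspose_apply]; exact star_mul_self_nonneg (B j i)

lemma psd_eq_zero_of_trace_eq_zero {n : ℕ} {A : Matrix (Fin n) (Fin n) ℂ}
    (h : A.PosSemidef) (h0 : A.trace = 0) : A = 0 := by
  obtain ⟨B, rfl⟩ := psd_exists_conjTranspose_mul_self h
  suffices hB : B = 0 by simp [hB]
  have htr : (∑ i, ∑ j, star (B j i) * B j i) = 0 := by
    rw [← h0, Matrix.trace]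
    refine Finset.sum_congr rfl fun i _ => ?_
    rw [Matrix.diag_apply, Matrix.mul_apply]
    exact Finset.sum_congr rfl fun j _ => by rw [Matrix.conjTranspose_apply]
  have h1 := (Finset.sum_eq_zero_iff_of_nonneg (fun i _ =>
    Finset.sum_nonneg fun j _ => star_mul_self_nonneg (B j i))).mp htr.symm.symm
  ext j i
  have h2 := (Finset.sum_eq_zero_iff_of_nonneg (fun j _ =>
    star_mul_self_nonneg (B j i))).mp (h1 i (Finset.mem_univ i)) j (Finset.mem_univ j)
  rw [Complex.star_def, ← Complex.normSq_eq_conj_mul_self] at h2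
  simpa using Complex.normSq_eq_zero.mp (by exact_mod_cast h2)

lemma psd_trace_pos {n : ℕ} {A : Matrix (Fin n) (Fin n) ℂ} (h : A.PosSemidef)
    (hne : A.trace ≠ 0) : 0 < A.trace :=
  lt_of_le_of_ne (psd_trace_nonneg h) (Ne.symm hne)

/-- If `ρ x = tr(ρ x) • C` on the fiber of `s x`, with `tr(ρ x) > 0`,
then the coarse-grained conditional at `s x` equals `C`. -/
lemma qcondOf_eq_of_fiber {X : Type*} [Fintype X] {n : ℕ}
    (ρ : X → Matrix (Fin n) (Fin n) ℂ) (hpsd : ∀ x, (ρ x).PosSemidef)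
    {S : Type*} (s : X → S) (x : X) (hx : 0 < (ρ x).trace)
    (C : Matrix (Fin n) (Fin n) ℂ)
    (hfib : ∀ y, s y = s x → ρ y = (ρ y).trace • C) :
    qcondOf ρ s (s x) = C := by
  have hc : 0 < ∑ y, if s y = s x then (ρ y).trace else 0 := by
    refine Finset.sum_pos' (fun y _ => ?_) ⟨x, Finset.mem_univ x, by simp [hx]⟩
    split_ifs
    · exact psd_trace_nonneg (hpsd y)
    · exact le_refl 0
  have h2 : (∑ y, if s y = s x then ρ y else 0)
      = (∑ y, if s y = s x then (ρ y).trace else 0) • C := by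
    rw [Finset.sum_smul]
    refine Finset.sum_congr rfl fun y _ => ?_
    split_ifs with hy
    · exact hfib y hy
    · simp
  rw [qcondOf, h2, smul_smul, inv_mul_cancel₀ hc.ne', one_smul]

/-- A sufficient statistic `t : X → T` for `X` with respect to the
quantum region `B` of a hybrid state `(ρ_x)` is minimal (a function of every other
sufficient statistic, on `{x : tr(ρ_x) > 0}`) if and only if, on `{x : tr(ρ_x) > 0}`,
`t(x) = t(x')` exactly when the conditional states `ρ_{B|X=x}` and `ρ_{B|X=x'}`
coincide. -/
theorem quantum_minimal_sufficient_statistic_iff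
    {X : Type*} [Fintype X] {n : ℕ}
    (ρ : X → Matrix (Fin n) (Fin n) ℂ)
    (hpsd : ∀ x, (ρ x).PosSemidef)
    (hnorm : ∑ x, (ρ x).trace = 1)
    {T : Type*} [Fintype T] (t : X → T)
    (ht : QSufficient ρ t) :
    (∀ (S : Type) [Fintype S] (s : X → S), QSufficient ρ s →
      ∃ f : S → T, ∀ x, 0 < (ρ x).trace → t x = f (s x))
    ↔ (∀ x x', 0 < (ρ x).trace → 0 < (ρ x').trace →
        (t x = t x' ↔ qcond ρ x = qcond ρ x')) := by
  constructor
  · -- minimality → characterization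
    intro hmin x x' hx hx'
    constructor
    · intro htt
      have h1 := ht x hx.ne'
      have h2 := ht x' hx'.ne'
      rw [← h1, ← h2, htt]
    · intro hq
      -- build a sufficient statistic from the conditional states
      let r : Setoid X := ⟨fun a b => qcond ρ a = qcond ρ b,
        ⟨fun _ => rfl, fun h => h.symm, fun h1 h2 => h1.trans h2⟩⟩
      haveI : DecidableEq (Quotient r) := Classical.decEq _
      let e := Fintype.equivFin (Quotient r)
      let s : X → Fin (Fintype.card (Quotient r)) := fun a => e (Quotient.mk r a)
      have hs : QSufficient ρ s := by
        intro y hy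
        have hy' : 0 < (ρ y).trace := psd_trace_pos (hpsd y) hy
        refine qcondOf_eq_of_fiber ρ hpsd s y hy' (qcond ρ y) fun z hz => ?_
        have hq' : qcond ρ z = qcond ρ y := Quotient.exact (e.injective hz)
        by_cases hz0 : (ρ z).trace = 0
        · rw [hz0, zero_smul]
          exact psd_eq_zero_of_trace_eq_zero (hpsd z) hz0
        · rw [← hq', qcond, smul_smul, mul_inv_cancel₀ hz0, one_smul]
      obtain ⟨f, hf⟩ := hmin _ s hs
      have hsx : s x = s x' := by
        simp only [s]
        congr 1
        exact Quotient.sound hq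
      rw [hf x hx, hf x' hx', hsx]
  · -- characterization → minimality
    intro hiff S _ s hs
    have hx0 : ∃ x, 0 < (ρ x).trace := by
      by_contra hcon
      push_neg at hcon
      have : ∀ x, (ρ x).trace = 0 := fun x => by
        by_contra hne
        exact hcon x (psd_trace_pos (hpsd x) hne)
      simp [this] at hnorm
    obtain ⟨x₀, hx₀⟩ := hx0
    refine ⟨fun a => if h : ∃ x, 0 < (ρ x).trace ∧ s x = a then t h.choose else t x₀,
      fun x hx => ?_⟩
    have hex : ∃ y, 0 < (ρ y).trace ∧ s y = s x := ⟨x, hx, rfl⟩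
    show t x = if h : ∃ y, 0 < (ρ y).trace ∧ s y = s x then t h.choose else t x₀
    rw [dif_pos hex]
    obtain ⟨hy1, hy2⟩ := hex.choose_spec
    have hq : qcond ρ hex.choose = qcond ρ x := by
      rw [← hs _ hy1.ne', ← hs _ hx.ne', hy2]
    exact ((hiff x hex.choose hx hy1).mpr hq.symm)

end
end

section
/- Let P be a joint probability distribution on finite sets X × Y and define the statistic t on {x : P(X=x) > 0} by t(x) = P(Y=·|X=x), taking values in the (finite) set of probability distributions on Y of this form. Then: (a) t is a minimal sufficient statistic for X with respect to Y; and (b) for every x with P(X=x) > 0, conditioning on the value of t reproduces that value: P(Y=·|t(X)=t(x)) = t(x), i.e., for all y, (Σ_{x′ : t(x′)=t(x)} P(x′,y)) / (Σ_{x′ : t(x′)=t(x)} P(X=x′)) = P(Y=y|X=x). -/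
open scoped BigOperators
open Classical

noncomputable section

lemma condYOf_eq_condY_aux {X Y : Type*} [Fintype X] [Fintype Y]
    (P : X → Y → ℝ) (hP0 : ∀ x y, 0 ≤ P x y)
    {T : Type*} (t : X → T) (x : X) (hx : 0 < margX P x)
    (ht : ∀ x', 0 < margX P x' → t x' = t x → condY P x' = condY P x) :
    ∀ y, condYOf P t (t x) y = condY P x y := by
  have hmnn : ∀ x, 0 ≤ margX P x := fun x => Finset.sum_nonneg fun y _ => hP0 x y
  have hzero : ∀ x y, margX P x = 0 → P x y = 0 := by
    intro x y h
    exact (Finset.sum_eq_zero_iff_of_nonneg (fun y _ => hP0 x y)).mp h y (Finset.mem_univ y)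
  intro y
  have hD : (0:ℝ) < ∑ x', if t x' = t x then margX P x' else 0 := by
    apply Finset.sum_pos'
    · intro i _; split
      · exact hmnn i
      · exact le_refl 0
    · exact ⟨x, Finset.mem_univ x, by simp [hx]⟩
  have hnum : (∑ x', if t x' = t x then P x' y else 0)
      = condY P x y * (∑ x', if t x' = t x then margX P x' else 0) := by
    rw [Finset.mul_sum]
    apply Finset.sum_congr rfl
    intro x' _
    split
    · rename_i h
      rcases eq_or_lt_of_le (hmnn x') with h0 | h0
      · rw [hzero x' y h0.symm, ← h0]; ring
      · have hc : condY P x' y * margX P x' = P x' y := by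
          simp only [condY]
          exact div_mul_cancel₀ _ h0.ne'
        rw [← hc, ht x' h0 h]
    · simp
  simp only [condYOf]
  rw [hnum, mul_div_assoc, div_self hD.ne', mul_one]

/-- The statistic `t(x) = P(Y=·|X=x)`, taking probability
distributions on `Y` as values, is (a) a minimal sufficient statistic for `X` with
respect to `Y`, and (b) conditioning on the value of `t` reproduces that value:
`P(Y=·|t(X)=t(x)) = t(x)` for every `x` with `P(X=x) > 0`. -/
theorem conditional_is_minimal_sufficient
    {X Y : Type*} [Fintype X] [Fintype Y]
    (P : X → Y → ℝ)
    (hP0 : ∀ x y, 0 ≤ P x y)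
    (hP1 : ∑ x, ∑ y, P x y = 1) :
    Sufficient P (fun x => condY P x) ∧
    (∀ (S : Type) [Fintype S] (s : X → S), Sufficient P s →
      ∃ f : S → (Y → ℝ), ∀ x, 0 < margX P x → condY P x = f (s x)) ∧
    (∀ x, 0 < margX P x → ∀ y,
      condYOf P (fun x' => condY P x') (condY P x) y = condY P x y) := by
  have hmnn : ∀ x, 0 ≤ margX P x := fun x => Finset.sum_nonneg fun y _ => hP0 x y
  have hzero : ∀ x y, margX P x = 0 → P x y = 0 := by
    intro x y h
    exact (Finset.sum_eq_zero_iff_of_nonneg (fun y _ => hP0 x y)).mp h y (Finset.mem_univ y)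
  have key : ∀ x, 0 < margX P x → ∀ y,
      condYOf P (fun x' => condY P x') (condY P x) y = condY P x y := by
    intro x hx y
    exact condYOf_eq_condY_aux P hP0 (fun x' => condY P x') x hx (fun x' _ h => h) y
  refine ⟨key, ?_, key⟩
  intro S _ s hs
  refine ⟨fun a => condYOf P s a, ?_⟩
  intro x hx
  funext y
  exact (hs x hx y).symm

end
end

section
/- Let P be a joint probability distribution on Y × X₁ × X₂ (all finite) whose marginal P(Y=y) is strictly positive for all y ∈ Y. Define the statistics R₁(x₁) = P(Y=·|X₁=x₁) and R₂(x₂) = P(Y=·|X₂=x₂) on the supports of P(X₁) and P(X₂). Assume R₁(X₁) and R₂(X₂) are conditionally independent given Y, i.e., for all y and all values a, b: P(R₁(X₁)=a, R₂(X₂)=b | Y=y) = P(R₁(X₁)=a | Y=y) · P(R₂(X₂)=b | Y=y). Then for any observed values x₁, x₂ with P(R₁(X₁)=Q₁, R₂(X₂)=Q₂) > 0, where Q₁ = R₁(x₁) and Q₂ = R₂(x₂), there is a constant c > 0 (independent of y) such that for all y ∈ Y: P(Y=y | R₁(X₁)=Q₁, R₂(X₂)=Q₂) = c · Q₁(y)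 · Q₂(y) / P(Y=y). -/
open scoped BigOperators
open Classical

noncomputable section

/-- The marginal `P(Y=y)` of a joint distribution on `Y × X₁ × X₂`. -/
def margY {Y X₁ X₂ : Type*} [Fintype X₁] [Fintype X₂]
    (P : Y → X₁ → X₂ → ℝ) (y : Y) : ℝ :=
  ∑ x₁, ∑ x₂, P y x₁ x₂

/-- The marginal `P(X₁=x₁)`. -/
def margX₁ {Y X₁ X₂ : Type*} [Fintype Y] [Fintype X₂]
    (P : Y → X₁ → X₂ → ℝ) (x₁ : X₁) : ℝ :=
  ∑ y, ∑ x₂, P y x₁ x₂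

/-- The marginal `P(X₂=x₂)`. -/
def margX₂ {Y X₁ X₂ : Type*} [Fintype Y] [Fintype X₁]
    (P : Y → X₁ → X₂ → ℝ) (x₂ : X₂) : ℝ :=
  ∑ y, ∑ x₁, P y x₁ x₂

/-- The statistic `R₁(x₁) = P(Y=·|X₁=x₁)`. -/
def R₁ {Y X₁ X₂ : Type*} [Fintype Y] [Fintype X₂]
    (P : Y → X₁ → X₂ → ℝ) (x₁ : X₁) : Y → ℝ :=
  fun y => (∑ x₂, P y x₁ x₂) / margX₁ P x₁

/-- The statistic `R₂(x₂) = P(Y=·|X₂=x₂)`. -/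
def R₂ {Y X₁ X₂ : Type*} [Fintype Y] [Fintype X₁]
    (P : Y → X₁ → X₂ → ℝ) (x₂ : X₂) : Y → ℝ :=
  fun y => (∑ x₁, P y x₁ x₂) / margX₂ P x₂

/-- The joint probability `P(R₁(X₁)=a, R₂(X₂)=b, Y=y)`. -/
def jointRRY {Y X₁ X₂ : Type*} [Fintype Y] [Fintype X₁] [Fintype X₂]
    (P : Y → X₁ → X₂ → ℝ) (aa bb : Y → ℝ) (y : Y) : ℝ :=
  ∑ x₁, ∑ x₂, if R₁ P x₁ = aa ∧ R₂ P x₂ = bb then P y x₁ x₂ else 0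

/-- The joint probability `P(R₁(X₁)=a, Y=y)`. -/
def jointR₁Y {Y X₁ X₂ : Type*} [Fintype Y] [Fintype X₁] [Fintype X₂]
    (P : Y → X₁ → X₂ → ℝ) (aa : Y → ℝ) (y : Y) : ℝ :=
  ∑ x₁, ∑ x₂, if R₁ P x₁ = aa then P y x₁ x₂ else 0

/-- The joint probability `P(R₂(X₂)=b, Y=y)`. -/
def jointR₂Y {Y X₁ X₂ : Type*} [Fintype Y] [Fintype X₁] [Fintype X₂]
    (P : Y → X₁ → X₂ → ℝ) (bb : Y → ℝ) (y : Y) : ℝ :=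
  ∑ x₁, ∑ x₂, if R₂ P x₂ = bb then P y x₁ x₂ else 0

/-- (Classical supra-Bayesian pooling, shared priors.)
If the minimal sufficient statistics `R₁(X₁) = P(Y=·|X₁=·)` and `R₂(X₂) = P(Y=·|X₂=·)`
are conditionally independent given `Y` (whose marginal is strictly positive), then for
observed values `x₁`, `x₂` the supra-Bayesian pooled state is the generalized
multiplicative pool: `P(Y=y|R₁=Q₁, R₂=Q₂) = c · Q₁(y) · Q₂(y) / P(Y=y)`. -/
theorem classical_multiplicative_pooling
    {Y X₁ X₂ : Type*} [Fintype Y] [Fintype X₁] [Fintype X₂]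
    (P : Y → X₁ → X₂ → ℝ)
    (hP0 : ∀ y x₁ x₂, 0 ≤ P y x₁ x₂)
    (hP1 : ∑ y, margY P y = 1)
    (hYpos : ∀ y, 0 < margY P y)
    (hCI : ∀ (y : Y) (aa bb : Y → ℝ),
      jointRRY P aa bb y / margY P y
        = (jointR₁Y P aa y / margY P y) * (jointR₂Y P bb y / margY P y))
    (x₁ : X₁) (x₂ : X₂)
    (hobs : 0 < ∑ y, jointRRY P (R₁ P x₁) (R₂ P x₂) y) :
    ∃ c : ℝ, 0 < c ∧ ∀ y,
      jointRRY P (R₁ P x₁) (R₂ P x₂) y / (∑ y', jointRRY P (R₁ P x₁) (R₂ P x₂) y')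
        = c * R₁ P x₁ y * R₂ P x₂ y / margY P y := by
  classical
  set Q₁ := R₁ P x₁ with hQ₁def
  set Q₂ := R₂ P x₂ with hQ₂def
  have key1 : ∀ x₁' : X₁, R₁ P x₁' = Q₁ → ∀ y, ∑ x₂', P y x₁' x₂' = Q₁ y * margX₁ P x₁' := by
    intro x₁' h y
    by_cases hm : margX₁ P x₁' = 0
    · have hz : ∑ x₂', P y x₁' x₂' = 0 :=
        (Finset.sum_eq_zero_iff_of_nonneg
          (fun y'' _ => Finset.sum_nonneg fun x _ => hP0 y'' x₁' x)).mp hm y (Finset.mem_univ _)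
      rw [hz, hm, mul_zero]
    · have hQ : Q₁ y = (∑ x₂', P y x₁' x₂') / margX₁ P x₁' := by rw [← h]; rfl
      rw [hQ]; field_simp
  have key2 : ∀ x₂' : X₂, R₂ P x₂' = Q₂ → ∀ y, ∑ x₁', P y x₁' x₂' = Q₂ y * margX₂ P x₂' := by
    intro x₂' h y
    by_cases hm : margX₂ P x₂' = 0
    · have hz : ∑ x₁', P y x₁' x₂' = 0 :=
        (Finset.sum_eq_zero_iff_of_nonneg
          (fun y'' _ => Finset.sum_nonneg fun x _ => hP0 y'' x x₂')).mp hm y (Finset.mem_univ _)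
      rw [hz, hm, mul_zero]
    · have hQ : Q₂ y = (∑ x₁', P y x₁' x₂') / margX₂ P x₂' := by rw [← h]; rfl
      rw [hQ]; field_simp
  set M₁ : ℝ := ∑ x₁', if R₁ P x₁' = Q₁ then margX₁ P x₁' else 0 with hM₁def
  set M₂ : ℝ := ∑ x₂', if R₂ P x₂' = Q₂ then margX₂ P x₂' else 0 with hM₂def
  have hj1 : ∀ y, jointR₁Y P Q₁ y = Q₁ y * M₁ := by
    intro y
    unfold jointR₁Y
    rw [hM₁def, Finset.mul_sum]
    refine Finset.sum_congr rfl fun x₁' _ => ?_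
    by_cases h : R₁ P x₁' = Q₁
    · simp only [h, if_true]
      exact key1 x₁' h y
    · simp [h]
  have hj2 : ∀ y, jointR₂Y P Q₂ y = Q₂ y * M₂ := by
    intro y
    unfold jointR₂Y
    rw [Finset.sum_comm, hM₂def, Finset.mul_sum]
    refine Finset.sum_congr rfl fun x₂' _ => ?_
    by_cases h : R₂ P x₂' = Q₂
    · simp only [h, if_true]
      exact key2 x₂' h y
    · simp [h]
  have hjoint : ∀ y, jointRRY P Q₁ Q₂ y = Q₁ y * Q₂ y * M₁ * M₂ / margY P y := by
    intro y
    have h := hCI y Q₁ Q₂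
    have hm : margY P y ≠ 0 := (hYpos y).ne'
    rw [hj1, hj2] at h
    have h2 : jointRRY P Q₁ Q₂ y
        = (Q₁ y * M₁ / margY P y) * (Q₂ y * M₂ / margY P y) * margY P y := by
      rw [← h, div_mul_cancel₀ _ hm]
    rw [h2]; field_simp
  set S : ℝ := ∑ y', jointRRY P Q₁ Q₂ y' with hSdef
  have hSpos : 0 < S := hobs
  have hM₁nn : 0 ≤ M₁ := Finset.sum_nonneg fun x _ => by
    split_ifs
    · exact Finset.sum_nonneg fun y _ => Finset.sum_nonneg fun x₂' _ => hP0 _ _ _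
    · exact le_refl 0
  have hM₂nn : 0 ≤ M₂ := Finset.sum_nonneg fun x _ => by
    split_ifs
    · exact Finset.sum_nonneg fun y _ => Finset.sum_nonneg fun x₁' _ => hP0 _ _ _
    · exact le_refl 0
  have hMne : M₁ * M₂ ≠ 0 := by
    intro h0
    have hS0 : S = 0 := by
      rw [hSdef]
      apply Finset.sum_eq_zero
      intro y _
      rw [hjoint y,
        show Q₁ y * Q₂ y * M₁ * M₂ = Q₁ y * Q₂ y * (M₁ * M₂) by ring, h0, mul_zero, zero_div]
    exact hSpos.ne' hS0
  have hMpos : 0 < M₁ * M₂ := lt_of_le_of_ne (mul_nonneg hM₁nn hM₂nn) (Ne.symm hMne)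
  refine ⟨M₁ * M₂ / S, div_pos hMpos hSpos, fun y => ?_⟩
  rw [hjoint y]
  have hm : margY P y ≠ 0 := (hYpos y).ne'
  have hS : S ≠ 0 := hSpos.ne'
  field_simp

end
end
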